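/- arXiv:2208.05287 — 7 statements merged into one kernel-verified Lean document; each statement's English description precedes it below -/
import Mathlib

section
/- (Theorem 1, StoPS, K-step form.) Assume each f_i is differentiable and convex, f is μ-strongly convex with minimizer x*, and that for every x ≠ x* and every minibatch s the shifted minibatch gradient satisfies H_s(x) ≠ 0. Suppose γmin > 0 satisfies μ·γmin ≤ 1 and γ^StoPS_s(x) ≥ γmin for every x ≠ x* and every minibatch s. Fix x^0 ∈ E and, for each sequence of minibatches (s^0, …, s^{K−1}), define iterates by x^{k+1} = x^k − γ^StoPS_{s^k}(x^k)·H_{s^k}(x^k) (with the convention that the update leaves x^k unchanged when H_{s^k}(x^k) = 0, e.g. when x^k = x*). Then the average over all N^{nK} sequences of minibatches of ‖x^K − x*‖² is at most (1 − μ·γmin)^K · ‖x^0 − x*‖². -/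
open scoped BigOperators RealInnerProductSpace

lemma inner_gradient_apply' {d : ℕ} (φ : EuclideanSpace ℝ (Fin d) → ℝ)
    (x v : EuclideanSpace ℝ (Fin d)) :
    ⟪gradient φ x, v⟫ = fderiv ℝ φ x v := by
  rw [gradient]; exact InnerProductSpace.toDual_symm_apply

lemma grad_avg' {d N : ℕ} (f : Fin N → EuclideanSpace ℝ (Fin d) → ℝ)
    (hdiff : ∀ i, Differentiable ℝ (f i)) (x v : EuclideanSpace ℝ (Fin d)) :
    ⟪gradient (fun z => (N : ℝ)⁻¹ * ∑ i, f i z) x, v⟫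
      = (N : ℝ)⁻¹ * ∑ i, ⟪gradient (f i) x, v⟫ := by
  rw [inner_gradient_apply']
  have hsum : DifferentiableAt ℝ (fun z => ∑ i, f i z) x :=
    DifferentiableAt.fun_sum (fun i _ => (hdiff i) x)
  rw [fderiv_const_mul hsum, fderiv_fun_sum (fun i _ => (hdiff i) x)]
  simp only [ContinuousLinearMap.smul_apply, ContinuousLinearMap.sum_apply, smul_eq_mul]
  congr 1
  exact Finset.sum_congr rfl fun i _ => (inner_gradient_apply' (f i) x v).symm

lemma conv_grad' {d : ℕ} (φ : EuclideanSpace ℝ (Fin d) → ℝ)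
    (hφ : Differentiable ℝ φ) (hc : ConvexOn ℝ Set.univ φ)
    (x y : EuclideanSpace ℝ (Fin d)) :
    φ x + ⟪gradient φ x, y - x⟫ ≤ φ y := by
  rw [inner_gradient_apply']
  set v := y - x with hv
  set ψ : ℝ → ℝ := fun t => φ (x + t • v) with hψ
  have hder : HasDerivAt ψ (fderiv ℝ φ x v) 0 := by
    have h1 : HasDerivAt (fun t : ℝ => x + t • v) v 0 := by
      simpa using ((hasDerivAt_id (0:ℝ)).smul_const v).const_add x
    have h2 : HasFDerivAt φ (fderiv ℝ φ x) (x + (0:ℝ) • v) := by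
      simpa using (hφ x).hasFDerivAt
    exact h2.comp_hasDerivAt 0 h1
  have hslope : ∀ t ∈ Set.Ioo (0:ℝ) 1, slope ψ 0 t ≤ φ y - φ x := by
    intro t ht
    have hcomb : x + t • v = (1 - t) • x + t • y := by
      simp [hv, smul_sub, sub_smul]; abel
    have hcv := hc.2 (Set.mem_univ x) (Set.mem_univ y)
        (by linarith [ht.2] : (0:ℝ) ≤ 1 - t) (le_of_lt ht.1) (by ring)
    have hle : ψ t ≤ (1 - t) * φ x + t * φ y := by
      rw [hψ]; simpa [hcomb, smul_eq_mul] using hcv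
    have h0 : ψ 0 = φ x := by simp [ψ]
    rw [slope_def_field, sub_zero, div_le_iff₀ ht.1]
    nlinarith [hle, h0]
  have htend : Filter.Tendsto (slope ψ 0) (nhdsWithin 0 (Set.Ioi 0))
      (nhds (fderiv ℝ φ x v)) :=
    (hasDerivAt_iff_tendsto_slope.mp hder).mono_left
      (nhdsWithin_mono _ (fun t ht => Set.mem_compl_singleton_iff.mpr (ne_of_gt ht)))
  have hfin : fderiv ℝ φ x v ≤ φ y - φ x := by
    refine le_of_tendsto htend ?_
    filter_upwards [Ioo_mem_nhdsGT_of_mem (by norm_num : (0:ℝ) ∈ Set.Ico (0:ℝ) 1)] with t ht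
    exact hslope t ht
  linarith

lemma count_sum' {N n : ℕ} (B : Fin N → ℝ) (j : Fin n) :
    ∑ s : Fin n → Fin N, B (s j) = (N : ℝ) ^ (n - 1) * ∑ i, B i := by
  rw [← Equiv.sum_comp (Equiv.piSplitAt j (fun _ : Fin n => Fin N)).symm
    (fun s => B (s j))]
  have happ : ∀ p : Fin N × ({ j' // j' ≠ j } → Fin N),
      ((Equiv.piSplitAt j (fun _ : Fin n => Fin N)).symm p) j = p.1 := by
    intro p; simp [Equiv.piSplitAt]
  simp only [happ]
  rw [Fintype.sum_prod_type]
  have hcard : Fintype.card ({ j' // j' ≠ j } → Fin N) = N ^ (n - 1) := by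
    rw [Fintype.card_fun, Fintype.card_fin]
    congr 1
    simpa [Fintype.card_fin] using Fintype.card_subtype_compl (fun j' : Fin n => j' = j)
  simp only [Finset.sum_const, Finset.card_univ, hcard, nsmul_eq_mul]
  rw [Finset.mul_sum]
  exact Finset.sum_congr rfl fun a _ => by push_cast; ring

lemma onestep
    (d N n : ℕ) (hN : 1 ≤ N) (hn : 1 ≤ n)
    (f : Fin N → EuclideanSpace ℝ (Fin d) → ℝ)
    (hdiff : ∀ i, Differentiable ℝ (f i))
    (hconv : ∀ i, ConvexOn ℝ Set.univ (f i))
    (μ : ℝ) (hμ : 0 < μ)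
    (xstar : EuclideanSpace ℝ (Fin d))
    (hsc : ∀ x y : EuclideanSpace ℝ (Fin d),
      (N : ℝ)⁻¹ * ∑ i, f i x
        + ⟪gradient (fun z => (N : ℝ)⁻¹ * ∑ i, f i z) x, y - x⟫
        + μ / 2 * ‖y - x‖ ^ 2 ≤ (N : ℝ)⁻¹ * ∑ i, f i y)
    (H : (Fin n → Fin N) → EuclideanSpace ℝ (Fin d) → EuclideanSpace ℝ (Fin d))
    (hH : ∀ s x, H s x
      = (n : ℝ)⁻¹ • ∑ j, (gradient (f (s j)) x - gradient (f (s j)) xstar))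
    (γ : (Fin n → Fin N) → EuclideanSpace ℝ (Fin d) → ℝ)
    (hγ : ∀ s x, γ s x
      = 2 * ((n : ℝ)⁻¹ * ∑ j, (f (s j) x - f (s j) xstar
          - ⟪gradient (f (s j)) xstar, x - xstar⟫)) / ‖H s x‖ ^ 2)
    (hHne : ∀ x, x ≠ xstar → ∀ s, H s x ≠ 0)
    (γmin : ℝ) (hγmin : 0 < γmin)
    (hlb : ∀ x, x ≠ xstar → ∀ s, γmin ≤ γ s x)
    (x : EuclideanSpace ℝ (Fin d)) :
    ∑ s : Fin n → Fin N, ‖x - γ s x • H s x - xstar‖ ^ 2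
      ≤ (N : ℝ) ^ n * (1 - μ * γmin) * ‖x - xstar‖ ^ 2 := by
  by_cases hx : x = xstar
  · subst hx
    have hH0 : ∀ s, H s x = 0 := fun s => by simp [hH]
    simp [hH0]
  set v : EuclideanSpace ℝ (Fin d) := x - xstar with hvdef
  set Bp : Fin N → ℝ := fun i => ⟪gradient (f i) x, v⟫ - (f i x - f i xstar) with hBpdef
  have hBp : ∀ i, 0 ≤ Bp i := by
    intro i
    have h := conv_grad' (f i) (hdiff i) (hconv i) x xstar
    have hneg : ⟪gradient (f i) x, xstar - x⟫ = -⟪gradient (f i) x, v⟫ := by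
      rw [hvdef, ← inner_neg_right]; congr 1; abel
    rw [hneg] at h
    simp only [hBpdef]; linarith
  set D : (Fin n → Fin N) → ℝ := fun s => (n : ℝ)⁻¹ * ∑ j, Bp (s j) with hDdef
  have hD0 : ∀ s, 0 ≤ D s := fun s =>
    mul_nonneg (by positivity) (Finset.sum_nonneg fun j _ => hBp (s j))
  have hn0 : (n : ℝ) ≠ 0 := by positivity
  have hNe : (N : ℝ) ≠ 0 := by positivity
  -- per-sample identity
  have hkey : ∀ s, ‖x - γ s x • H s x - xstar‖ ^ 2 = ‖v‖ ^ 2 - 2 * γ s x * D s := by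
    intro s
    have hHs : H s x ≠ 0 := hHne x hx s
    have hHsq : (0:ℝ) < ‖H s x‖ ^ 2 := pow_pos (norm_pos_iff.mpr hHs) 2
    set Db : ℝ := (n : ℝ)⁻¹ * ∑ j, (f (s j) x - f (s j) xstar
        - ⟪gradient (f (s j)) xstar, x - xstar⟫) with hDbdef
    have hγs : γ s x * ‖H s x‖ ^ 2 = 2 * Db := by
      rw [hγ s x, div_mul_cancel₀ _ (ne_of_gt hHsq), hDbdef]
    have hinner : ⟪v, H s x⟫ = Db + D s := by
      rw [hH, real_inner_smul_right, inner_sum]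
      rw [hDbdef, hDdef, ← mul_add, ← Finset.sum_add_distrib]
      congr 1
      refine Finset.sum_congr rfl fun j _ => ?_
      rw [inner_sub_right]
      have h1 : ⟪v, gradient (f (s j)) x⟫ = ⟪gradient (f (s j)) x, v⟫ := real_inner_comm _ _
      have h2 : ⟪v, gradient (f (s j)) xstar⟫ = ⟪gradient (f (s j)) xstar, x - xstar⟫ := by
        rw [← hvdef]; exact real_inner_comm _ _
      rw [h1, h2]; simp only [hBpdef, ← hvdef]
      have h3 : ⟪gradient (f (s j)) xstar, x - xstar⟫ = ⟪gradient (f (s j)) xstar, v⟫ := by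
        rw [← hvdef]
      ring
    have hexp : x - γ s x • H s x - xstar = v - γ s x • H s x := by
      rw [hvdef]; abel
    rw [hexp, norm_sub_sq_real, real_inner_smul_right, norm_smul, mul_pow,
      Real.norm_eq_abs, sq_abs, hinner]
    linear_combination (γ s x) * hγs
  -- per-sample bound
  have hbound : ∀ s, ‖x - γ s x • H s x - xstar‖ ^ 2 ≤ ‖v‖ ^ 2 - 2 * γmin * D s := by
    intro s
    rw [hkey s]
    nlinarith [hD0 s, hlb x hx s]
  -- sum of D
  have hsumD : ∑ s : Fin n → Fin N, D s = (N : ℝ) ^ (n - 1) * ∑ i, Bp i := by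
    simp only [hDdef]
    rw [← Finset.mul_sum, Finset.sum_comm]
    rw [Finset.sum_congr rfl fun j _ => count_sum' Bp j, Finset.sum_const,
      Finset.card_univ, Fintype.card_fin, nsmul_eq_mul]
    rw [← mul_assoc, inv_mul_cancel₀ hn0, one_mul]
  have hpow : (N : ℝ) ^ n = (N : ℝ) ^ (n - 1) * N := by
    rw [← pow_succ]; congr 1; omega
  have hNn : (N : ℝ) ^ n * ((N : ℝ)⁻¹ * ∑ i, Bp i) = (N : ℝ) ^ (n - 1) * ∑ i, Bp i := by
    rw [hpow, mul_assoc, mul_inv_cancel_left₀ hNe]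
  -- strong convexity bound
  have hscx := hsc x xstar
  rw [grad_avg' f hdiff x (xstar - x)] at hscx
  have hinner2 : ∀ i, ⟪gradient (f i) x, xstar - x⟫ = -⟪gradient (f i) x, v⟫ := by
    intro i; rw [hvdef, ← inner_neg_right]; congr 1; abel
  simp only [hinner2] at hscx
  have hnrm : ‖xstar - x‖ = ‖v‖ := by rw [hvdef, norm_sub_rev]
  rw [hnrm] at hscx
  have hBsum : μ / 2 * ‖v‖ ^ 2 ≤ (N : ℝ)⁻¹ * ∑ i, Bp i := by
    simp only [hBpdef]
    rw [Finset.sum_sub_distrib, mul_sub, Finset.sum_sub_distrib, mul_sub]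
    have hsneg : (N:ℝ)⁻¹ * ∑ i, -⟪gradient (f i) x, v⟫
        = -((N:ℝ)⁻¹ * ∑ i, ⟪gradient (f i) x, v⟫) := by
      rw [Finset.sum_neg_distrib, mul_neg]
    rw [hsneg] at hscx
    linarith
  have hNpos : (0:ℝ) < (N:ℝ) ^ n := by positivity
  calc ∑ s : Fin n → Fin N, ‖x - γ s x • H s x - xstar‖ ^ 2
      ≤ ∑ s : Fin n → Fin N, (‖v‖ ^ 2 - 2 * γmin * D s) :=
        Finset.sum_le_sum fun s _ => hbound s
    _ ≤ (N : ℝ) ^ n * (1 - μ * γmin) * ‖x - xstar‖ ^ 2 := by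
        rw [Finset.sum_sub_distrib, Finset.sum_const, Finset.card_univ]
        have hcardS : Fintype.card (Fin n → Fin N) = N ^ n := by
          rw [Fintype.card_fun, Fintype.card_fin, Fintype.card_fin]
        rw [hcardS, nsmul_eq_mul]
        push_cast
        have h1 : ∑ s : Fin n → Fin N, 2 * γmin * D s
            = 2 * γmin * ((N:ℝ) ^ n * ((N:ℝ)⁻¹ * ∑ i, Bp i)) := by
          rw [← Finset.mul_sum, hsumD, hNn]
        have h2 : 2 * γmin * ((N:ℝ) ^ n * (μ / 2 * ‖v‖ ^ 2))
            ≤ 2 * γmin * ((N:ℝ) ^ n * ((N:ℝ)⁻¹ * ∑ i, Bp i)) :=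
          mul_le_mul_of_nonneg_left
            (mul_le_mul_of_nonneg_left hBsum (le_of_lt hNpos)) (by positivity)
        have hring : (N : ℝ) ^ n * (1 - μ * γmin) * ‖v‖ ^ 2
            = (N:ℝ) ^ n * ‖v‖ ^ 2 - 2 * γmin * ((N:ℝ) ^ n * (μ / 2 * ‖v‖ ^ 2)) := by ring
        rw [← hvdef]  -- fold ‖x - xstar‖ if needed
        linarith [h1, h2, hring.le, hring.ge]

/-- Theorem 1 (StoPS, K-step form). -/
theorem stops_K_step
    (d N n K : ℕ) (hN : 1 ≤ N) (hn : 1 ≤ n)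
    (f : Fin N → EuclideanSpace ℝ (Fin d) → ℝ)
    (hdiff : ∀ i, Differentiable ℝ (f i))
    (hconv : ∀ i, ConvexOn ℝ Set.univ (f i))
    (μ : ℝ) (hμ : 0 < μ)
    (xstar : EuclideanSpace ℝ (Fin d))
    (hsc : ∀ x y : EuclideanSpace ℝ (Fin d),
      (N : ℝ)⁻¹ * ∑ i, f i x
        + ⟪gradient (fun z => (N : ℝ)⁻¹ * ∑ i, f i z) x, y - x⟫
        + μ / 2 * ‖y - x‖ ^ 2 ≤ (N : ℝ)⁻¹ * ∑ i, f i y)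
    (hmin : ∀ y, (N : ℝ)⁻¹ * ∑ i, f i xstar ≤ (N : ℝ)⁻¹ * ∑ i, f i y)
    (H : (Fin n → Fin N) → EuclideanSpace ℝ (Fin d) → EuclideanSpace ℝ (Fin d))
    (hH : ∀ s x, H s x
      = (n : ℝ)⁻¹ • ∑ j, (gradient (f (s j)) x - gradient (f (s j)) xstar))
    (γ : (Fin n → Fin N) → EuclideanSpace ℝ (Fin d) → ℝ)
    (hγ : ∀ s x, γ s x
      = 2 * ((n : ℝ)⁻¹ * ∑ j, (f (s j) x - f (s j) xstar
          - ⟪gradient (f (s j)) xstar, x - xstar⟫)) / ‖H s x‖ ^ 2)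
    (hHne : ∀ x, x ≠ xstar → ∀ s, H s x ≠ 0)
    (γmin : ℝ) (hγmin : 0 < γmin) (hμγ : μ * γmin ≤ 1)
    (hlb : ∀ x, x ≠ xstar → ∀ s, γmin ≤ γ s x)
    (x0 : EuclideanSpace ℝ (Fin d))
    (X : (Fin K → Fin n → Fin N) → ℕ → EuclideanSpace ℝ (Fin d))
    (hX0 : ∀ S, X S 0 = x0)
    (hXstep : ∀ S (k : Fin K),
      X S (k.val + 1)
        = X S k.val - γ (S k) (X S k.val) • H (S k) (X S k.val)) :
    (((N : ℝ) ^ n) ^ K)⁻¹ * ∑ S : Fin K → Fin n → Fin N, ‖X S K - xstar‖ ^ 2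
      ≤ (1 - μ * γmin) ^ K * ‖x0 - xstar‖ ^ 2 := by
  have hμγ0 : (0:ℝ) ≤ 1 - μ * γmin := by linarith
  have hNR : (0:ℝ) < (N:ℝ) := by exact_mod_cast hN
  have hC : (0:ℝ) < ((N:ℝ) ^ n) ^ K := by positivity
  -- the iterate at time m depends only on the first m minibatches
  have hdep : ∀ m : ℕ, m ≤ K → ∀ S S' : Fin K → Fin n → Fin N,
      (∀ j : Fin K, (j : ℕ) < m → S j = S' j) → X S m = X S' m := by
    intro m
    induction m with
    | zero => intro _ S S' _; rw [hX0, hX0]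
    | succ m ih =>
      intro hm S S' hag
      have hmK : m < K := lt_of_lt_of_le (Nat.lt_succ_self m) hm
      have e1 : X S (m+1) = X S m - γ (S ⟨m, hmK⟩) (X S m) • H (S ⟨m, hmK⟩) (X S m) :=
        hXstep S ⟨m, hmK⟩
      have e2 : X S' (m+1) = X S' m - γ (S' ⟨m, hmK⟩) (X S' m) • H (S' ⟨m, hmK⟩) (X S' m) :=
        hXstep S' ⟨m, hmK⟩
      rw [e1, e2, ih hmK.le S S' (fun j hj => hag j (lt_trans hj (Nat.lt_succ_self m))),
        hag ⟨m, hmK⟩ (Nat.lt_succ_self m)]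
  have claim : ∀ m : ℕ, m ≤ K →
      ∑ S : Fin K → Fin n → Fin N, ‖X S m - xstar‖ ^ 2
        ≤ (1 - μ * γmin) ^ m * (((N:ℝ) ^ n) ^ K * ‖x0 - xstar‖ ^ 2) := by
    intro m
    induction m with
    | zero =>
      intro _
      simp only [hX0, pow_zero, one_mul]
      rw [Finset.sum_const, Finset.card_univ, nsmul_eq_mul]
      have : Fintype.card (Fin K → Fin n → Fin N) = (N ^ n) ^ K := by
        rw [Fintype.card_fun, Fintype.card_fun, Fintype.card_fin, Fintype.card_fin,
          Fintype.card_fin]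
      rw [this]; push_cast; exact le_rfl
    | succ m ih =>
      intro hm
      have hmK : m < K := lt_of_lt_of_le (Nat.lt_succ_self m) hm
      set kk : Fin K := ⟨m, hmK⟩ with hkk
      set e := Equiv.piSplitAt kk (fun _ : Fin K => Fin n → Fin N) with he
      rw [← Equiv.sum_comp e.symm (fun S => ‖X S (m+1) - xstar‖ ^ 2),
        Fintype.sum_prod_type, Finset.sum_comm]
      have hrest : ∀ rest : { j // j ≠ kk } → (Fin n → Fin N),
          ∑ a : Fin n → Fin N, ‖X (e.symm (a, rest)) (m+1) - xstar‖ ^ 2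
            ≤ (1 - μ * γmin) * ∑ a : Fin n → Fin N, ‖X (e.symm (a, rest)) m - xstar‖ ^ 2 := by
        intro rest
        set a0 : Fin n → Fin N := fun _ => ⟨0, hN⟩ with ha0
        set y := X (e.symm (a0, rest)) m with hy
        have hXm : ∀ a, X (e.symm (a, rest)) m = y := by
          intro a
          refine hdep m hmK.le _ _ ?_
          intro j hj
          have hjne : j ≠ kk := by
            intro hh; rw [hh] at hj; exact Nat.lt_irrefl m hj
          show e.symm (a, rest) j = e.symm (a0, rest) j
          simp [he, Equiv.piSplitAt, hjne]
        have hk : ∀ a : Fin n → Fin N, (e.symm (a, rest)) kk = a := by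
          intro a; simp [he, Equiv.piSplitAt]
        have hXm1 : ∀ a, X (e.symm (a, rest)) (m+1) = y - γ a y • H a y := by
          intro a
          have e1 : X (e.symm (a, rest)) (m+1)
              = X (e.symm (a, rest)) m
                - γ ((e.symm (a, rest)) kk) (X (e.symm (a, rest)) m)
                  • H ((e.symm (a, rest)) kk) (X (e.symm (a, rest)) m) :=
            hXstep _ kk
          rw [e1, hXm a, hk a]
        simp only [hXm1, hXm]
        rw [Finset.sum_const, Finset.card_univ, nsmul_eq_mul]
        have hcard : Fintype.card (Fin n → Fin N) = N ^ n := by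
          rw [Fintype.card_fun, Fintype.card_fin, Fintype.card_fin]
        rw [hcard]
        have := onestep d N n hN hn f hdiff hconv μ hμ xstar hsc H hH γ hγ hHne
          γmin hγmin hlb y
        push_cast
        calc ∑ a : Fin n → Fin N, ‖y - γ a y • H a y - xstar‖ ^ 2
            ≤ (N : ℝ) ^ n * (1 - μ * γmin) * ‖y - xstar‖ ^ 2 := this
          _ = (1 - μ * γmin) * ((N:ℝ) ^ n * ‖y - xstar‖ ^ 2) := by ring
      calc ∑ rest : { j // j ≠ kk } → (Fin n → Fin N),
            ∑ a : Fin n → Fin N, ‖X (e.symm (a, rest)) (m+1) - xstar‖ ^ 2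
          ≤ ∑ rest : { j // j ≠ kk } → (Fin n → Fin N),
            (1 - μ * γmin) * ∑ a : Fin n → Fin N, ‖X (e.symm (a, rest)) m - xstar‖ ^ 2 :=
            Finset.sum_le_sum fun rest _ => hrest rest
        _ = (1 - μ * γmin) * ∑ S : Fin K → Fin n → Fin N, ‖X S m - xstar‖ ^ 2 := by
            rw [← Finset.mul_sum]
            congr 1
            have h := Equiv.sum_comp e.symm (fun S => ‖X S m - xstar‖ ^ 2)
            rw [Fintype.sum_prod_type] at h
            rw [← h]
            exact Finset.sum_comm
        _ ≤ (1 - μ * γmin) * ((1 - μ * γmin) ^ m * (((N:ℝ) ^ n) ^ K * ‖x0 - xstar‖ ^ 2)) :=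
            mul_le_mul_of_nonneg_left (ih hmK.le) hμγ0
        _ = (1 - μ * γmin) ^ (m+1) * (((N:ℝ) ^ n) ^ K * ‖x0 - xstar‖ ^ 2) := by
            rw [pow_succ]; ring
  have hK := claim K le_rfl
  calc (((N : ℝ) ^ n) ^ K)⁻¹ * ∑ S : Fin K → Fin n → Fin N, ‖X S K - xstar‖ ^ 2
      ≤ (((N : ℝ) ^ n) ^ K)⁻¹
          * ((1 - μ * γmin) ^ K * (((N:ℝ) ^ n) ^ K * ‖x0 - xstar‖ ^ 2)) :=
        mul_le_mul_of_nonneg_left hK (by positivity)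
    _ = (1 - μ * γmin) ^ K * ‖x0 - xstar‖ ^ 2 := by
        rw [mul_left_comm, inv_mul_cancel_left₀ (ne_of_gt hC)]
end

section
/- (One-step contraction for StoPS.) Assume each f_i is differentiable and convex and f is μ-strongly convex with minimizer x*. Fix x ∈ E and assume H_s(x) ≠ 0 for every minibatch s, and that γmin > 0 satisfies μ·γmin ≤ 1 and γ^StoPS_s(x) ≥ γmin for every minibatch s. Then the average over all N^n minibatches s of ‖x − γ^StoPS_s(x)·H_s(x) − x*‖² is at most (1 − μ·γmin)·‖x − x*‖². -/
open scoped BigOperators RealInnerProductSpace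

section Aux
variable {F : Type*} [NormedAddCommGroup F] [InnerProductSpace ℝ F] [CompleteSpace F]

lemma inner_gradient_eq (f : F → ℝ) (x v : F) :
    ⟪gradient f x, v⟫ = fderiv ℝ f x v := by
  rw [gradient]; exact InnerProductSpace.toDual_symm_apply

lemma convex_first_order {f : F → ℝ} (hd : Differentiable ℝ f)
    (hc : ConvexOn ℝ Set.univ f) (x y : F) :
    f x + ⟪gradient f x, y - x⟫ ≤ f y := by
  rw [inner_gradient_eq]
  set g : ℝ → ℝ := fun t => f (t • (y - x) + x) with hg
  have hgc : ConvexOn ℝ Set.univ g := by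
    have := hc.comp_affineMap
      ((LinearMap.toSpanSingleton ℝ F (y - x)).toAffineMap + AffineMap.const ℝ ℝ x)
    simpa [Function.comp_def] using this
  have hgd : HasDerivAt g (fderiv ℝ f x (y - x)) 0 := by
    have h1 : HasDerivAt (fun t : ℝ => t • (y - x) + x) (y - x) 0 := by
      simpa using ((hasDerivAt_id (0:ℝ)).smul_const (y - x)).add_const x
    have h0 : (0:ℝ) • (y - x) + x = x := by simp
    have hf : HasFDerivAt f (fderiv ℝ f x) ((0:ℝ) • (y - x) + x) := by
      rw [h0]; exact (hd x).hasFDerivAt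
    have := hf.comp_hasDerivAt 0 h1
    simpa [Function.comp_def, hg] using this
  have := hgc.le_slope_of_hasDerivAt (Set.mem_univ (0:ℝ)) (Set.mem_univ (1:ℝ)) one_pos hgd
  simp [slope, hg] at this
  have hms := (fderiv ℝ f x).map_sub y x
  linarith

lemma sum_eval {N n : ℕ} (b : Fin N → ℝ) (j : Fin n) :
    ∑ s : Fin n → Fin N, b (s j) = (N:ℝ) ^ (n-1) * ∑ i, b i := by
  rw [← Equiv.sum_comp (Equiv.funSplitAt j (Fin N)).symm (fun s => b (s j))]
  have h1 : ∀ p : Fin N × ({k : Fin n // k ≠ j} → Fin N),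
      (Equiv.funSplitAt j (Fin N)).symm p j = p.1 := by
    intro p; simp [Equiv.funSplitAt, Equiv.piSplitAt]
  simp only [h1]
  rw [Fintype.sum_prod_type_right]
  have h2 : Fintype.card {k : Fin n // k ≠ j} = n - 1 := by
    simp [Fintype.card_subtype_compl]
  simp [Finset.sum_const, Fintype.card_fun, h2, mul_comm]
end Aux

/-- One-step contraction for StoPS. -/
theorem stops_one_step
    (d N n : ℕ) (hN : 1 ≤ N) (hn : 1 ≤ n)
    (f : Fin N → EuclideanSpace ℝ (Fin d) → ℝ)
    (hdiff : ∀ i, Differentiable ℝ (f i))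
    (hconv : ∀ i, ConvexOn ℝ Set.univ (f i))
    (μ : ℝ) (hμ : 0 < μ)
    (xstar : EuclideanSpace ℝ (Fin d))
    (hsc : ∀ x y : EuclideanSpace ℝ (Fin d),
      (N : ℝ)⁻¹ * ∑ i, f i x
        + ⟪gradient (fun z => (N : ℝ)⁻¹ * ∑ i, f i z) x, y - x⟫
        + μ / 2 * ‖y - x‖ ^ 2 ≤ (N : ℝ)⁻¹ * ∑ i, f i y)
    (hmin : ∀ y, (N : ℝ)⁻¹ * ∑ i, f i xstar ≤ (N : ℝ)⁻¹ * ∑ i, f i y)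
    (H : (Fin n → Fin N) → EuclideanSpace ℝ (Fin d) → EuclideanSpace ℝ (Fin d))
    (hH : ∀ s x, H s x
      = (n : ℝ)⁻¹ • ∑ j, (gradient (f (s j)) x - gradient (f (s j)) xstar))
    (γ : (Fin n → Fin N) → EuclideanSpace ℝ (Fin d) → ℝ)
    (hγ : ∀ s x, γ s x
      = 2 * ((n : ℝ)⁻¹ * ∑ j, (f (s j) x - f (s j) xstar
          - ⟪gradient (f (s j)) xstar, x - xstar⟫)) / ‖H s x‖ ^ 2)
    (x : EuclideanSpace ℝ (Fin d))
    (hHne : ∀ s, H s x ≠ 0)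
    (γmin : ℝ) (hγmin : 0 < γmin) (hμγ : μ * γmin ≤ 1)
    (hlb : ∀ s, γmin ≤ γ s x) :
    ((N : ℝ) ^ n)⁻¹ * ∑ s : Fin n → Fin N, ‖x - γ s x • H s x - xstar‖ ^ 2
      ≤ (1 - μ * γmin) * ‖x - xstar‖ ^ 2 := by
  classical
  set v := x - xstar with hv
  set b : Fin N → ℝ := fun i => f i xstar - f i x + ⟪gradient (f i) x, v⟫ with hb
  set a : Fin N → ℝ := fun i => f i x - f i xstar - ⟪gradient (f i) xstar, v⟫ with ha
  have hneg : ∀ (w : EuclideanSpace ℝ (Fin d)), ⟪w, xstar - x⟫ = -⟪w, v⟫ := by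
    intro w
    rw [hv, ← inner_neg_right]
    congr 1
    abel
  have hb0 : ∀ i, 0 ≤ b i := by
    intro i
    have h := convex_first_order (hdiff i) (hconv i) x xstar
    rw [hneg] at h
    simp only [hb]
    linarith
  -- inner product identity
  have hinner : ∀ s, ⟪H s x, v⟫ = (n:ℝ)⁻¹ * (∑ j, a (s j) + ∑ j, b (s j)) := by
    intro s
    rw [hH, real_inner_smul_left, sum_inner, ← Finset.sum_add_distrib]
    congr 1
    apply Finset.sum_congr rfl
    intro j _
    rw [inner_sub_left]
    simp only [ha, hb]
    ring
  -- step size identity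
  have hγH : ∀ s, γ s x * ‖H s x‖^2 = 2 * ((n:ℝ)⁻¹ * ∑ j, a (s j)) := by
    intro s
    have hne : ‖H s x‖^2 ≠ 0 := pow_ne_zero _ (norm_ne_zero_iff.mpr (hHne s))
    rw [hγ]
    have : (∑ j, (f (s j) x - f (s j) xstar - ⟪gradient (f (s j)) xstar, x - xstar⟫))
        = ∑ j, a (s j) := by
      apply Finset.sum_congr rfl; intro j _; simp only [ha, hv]
    rw [this, div_mul_cancel₀ _ hne]
  -- per-s key identity
  have hkey : ∀ s, ‖x - γ s x • H s x - xstar‖^2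
      = ‖v‖^2 - 2 * γ s x * ((n:ℝ)⁻¹ * ∑ j, b (s j)) := by
    intro s
    have e1 : x - γ s x • H s x - xstar = v - γ s x • H s x := by rw [hv]; abel
    rw [e1, norm_sub_sq_real]
    have e2 : ⟪v, γ s x • H s x⟫ = γ s x * ⟪H s x, v⟫ := by
      rw [real_inner_smul_right, real_inner_comm]
    have e3 : ‖γ s x • H s x‖^2 = γ s x * (γ s x * ‖H s x‖^2) := by
      rw [norm_smul]
      simp [mul_pow, sq_abs]
      ring
    rw [e2, e3, hγH s, hinner s]
    ring
  -- per-s inequality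
  have hstep : ∀ s : Fin n → Fin N, ‖x - γ s x • H s x - xstar‖^2
      ≤ ‖v‖^2 - 2 * γmin * ((n:ℝ)⁻¹ * ∑ j, b (s j)) := by
    intro s
    rw [hkey s]
    have hC0 : 0 ≤ (n:ℝ)⁻¹ * ∑ j, b (s j) := by
      apply mul_nonneg (by positivity)
      exact Finset.sum_nonneg fun j _ => hb0 (s j)
    nlinarith [hlb s]
  -- strong convexity bound
  have hgradbar : ⟪gradient (fun z => (N : ℝ)⁻¹ * ∑ i, f i z) x, xstar - x⟫
      = (N:ℝ)⁻¹ * ∑ i, ⟪gradient (f i) x, xstar - x⟫ := by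
    have hs : HasFDerivAt (fun z : EuclideanSpace ℝ (Fin d) => ∑ i, f i z)
        (∑ i, fderiv ℝ (f i) x) x :=
      HasFDerivAt.fun_sum (fun i _ => (hdiff i x).hasFDerivAt)
    have hfd : HasFDerivAt (fun z : EuclideanSpace ℝ (Fin d) => (N : ℝ)⁻¹ * ∑ i, f i z)
        ((N:ℝ)⁻¹ • ∑ i, fderiv ℝ (f i) x) x := hs.const_mul _
    rw [inner_gradient_eq, hfd.fderiv]
    simp only [ContinuousLinearMap.smul_apply, ContinuousLinearMap.sum_apply, smul_eq_mul]
    congr 1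
    exact Finset.sum_congr rfl fun i _ => (inner_gradient_eq (f i) x _).symm
  have hB : μ/2 * ‖v‖^2 ≤ (N:ℝ)⁻¹ * ∑ i, b i := by
    have h := hsc x xstar
    rw [hgradbar] at h
    have hnv : ‖xstar - x‖ = ‖v‖ := by rw [hv, norm_sub_rev]
    rw [hnv] at h
    have hexp : (N:ℝ)⁻¹ * ∑ i, b i
        = (N:ℝ)⁻¹ * ∑ i, f i xstar - (N:ℝ)⁻¹ * ∑ i, f i x
          + (N:ℝ)⁻¹ * ∑ i, ⟪gradient (f i) x, v⟫ := by
      simp only [hb]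
      rw [Finset.sum_add_distrib, Finset.sum_sub_distrib]
      ring
    have hinn : (N:ℝ)⁻¹ * ∑ i, ⟪gradient (f i) x, xstar - x⟫
        = -((N:ℝ)⁻¹ * ∑ i, ⟪gradient (f i) x, v⟫) := by
      rw [← mul_neg, ← Finset.sum_neg_distrib]
      congr 1
      exact Finset.sum_congr rfl fun i _ => hneg _
    rw [hinn] at h
    linarith [hexp]
  -- sum over minibatches
  have hsum : ∑ s : Fin n → Fin N, ‖x - γ s x • H s x - xstar‖^2
      ≤ (N:ℝ)^n * ‖v‖^2 - 2 * γmin * ((N:ℝ)^(n-1) * ∑ i, b i) := by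
    calc ∑ s : Fin n → Fin N, ‖x - γ s x • H s x - xstar‖^2
        ≤ ∑ s : Fin n → Fin N, (‖v‖^2 - 2 * γmin * ((n:ℝ)⁻¹ * ∑ j, b (s j))) :=
          Finset.sum_le_sum fun s _ => hstep s
      _ = (N:ℝ)^n * ‖v‖^2 - 2 * γmin * ((N:ℝ)^(n-1) * ∑ i, b i) := by
          rw [Finset.sum_sub_distrib, Finset.sum_const]
          have hcard : (Finset.univ : Finset (Fin n → Fin N)).card = N^n := by
            simp [Fintype.card_fun]
          rw [hcard]
          have hsw : ∑ s : Fin n → Fin N, (2 * γmin * ((n:ℝ)⁻¹ * ∑ j, b (s j)))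
              = 2 * γmin * ((n:ℝ)⁻¹ * ∑ s : Fin n → Fin N, ∑ j, b (s j)) := by
            rw [← Finset.mul_sum, ← Finset.mul_sum]
          rw [hsw, Finset.sum_comm]
          have : ∀ j : Fin n, ∑ s : Fin n → Fin N, b (s j) = (N:ℝ)^(n-1) * ∑ i, b i :=
            fun j => sum_eval b j
          rw [Finset.sum_congr rfl (fun j _ => this j), Finset.sum_const]
          have hn0 : (n:ℝ) ≠ 0 := by positivity
          simp only [Finset.card_univ, Fintype.card_fin, nsmul_eq_mul]
          push_cast
          field_simp
  -- final assembly
  have hP : (0:ℝ) < (N:ℝ)^n := by positivity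
  have hPQ : (N:ℝ)^(n-1) * N = (N:ℝ)^n := by
    rw [← pow_succ]
    congr 1
    omega
  rw [inv_mul_le_iff₀ hP]
  have hN0 : (0:ℝ) < (N:ℝ) := by exact_mod_cast Nat.cast_pos.mpr hN
  have hQ : (0:ℝ) ≤ (N:ℝ)^(n-1) := by positivity
  have hS : (N:ℝ) * (μ / 2 * ‖x - xstar‖ ^ 2) ≤ ∑ i, b i := by
    have h2 := mul_le_mul_of_nonneg_left hB hN0.le
    rwa [mul_inv_cancel_left₀ (ne_of_gt hN0)] at h2
  have h2 : 2 * γmin * ((N:ℝ)^(n-1) * ((N:ℝ) * (μ/2 * ‖x - xstar‖^2)))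
      ≤ 2 * γmin * ((N:ℝ)^(n-1) * ∑ i, b i) :=
    mul_le_mul_of_nonneg_left (mul_le_mul_of_nonneg_left hS hQ) (by positivity)
  calc ∑ s : Fin n → Fin N, ‖x - γ s x • H s x - xstar‖ ^ 2
      ≤ (N:ℝ)^n * ‖x - xstar‖^2
        - 2 * γmin * ((N:ℝ)^(n-1) * ((N:ℝ) * (μ/2 * ‖x - xstar‖^2))) := by
        linarith [hsum]
    _ = (N:ℝ)^n * ((1 - μ * γmin) * ‖x - xstar‖ ^ 2) := by rw [← hPQ]; ring
end

section
/- (Theorem 2, GraDS, K-step form.) Assume each f_i is convex and L-smooth (L > 0), f is μ-strongly convex with minimizer x*, and that for every x ≠ x* and every minibatch s the shifted minibatch gradient satisfies H_s(x) ≠ 0. Suppose γmin > 0 satisfies μ·γmin ≤ L and γ^GraDS_s(x) ≥ γmin for every x ≠ x* and every minibatch s. Fix x^0 ∈ E and, for each sequence of minibatches (s^0, …, s^{K−1}), define iterates by x^{k+1} = x^k − (1/L)·γ^GraDS_{s^k}(x^k)·H_{s^k}(x^k) (leaving x^k unchanged when H_{s^k}(x^k) = 0). Then the average over all N^{nK}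 sequences of minibatches of ‖x^K − x*‖² is at most (1 − γmin·μ/L)^K · ‖x^0 − x*‖². -/
open scoped BigOperators RealInnerProductSpace

section AuxGrads

variable {E : Type*} [NormedAddCommGroup E] [InnerProductSpace ℝ E] [CompleteSpace E]

lemma GradsAux.line_hasDerivAt (f : E → ℝ) (hd : Differentiable ℝ f) (x y : E) (t : ℝ) :
    HasDerivAt (fun t : ℝ => f (x + t • (y - x)))
      ⟪gradient f (x + t • (y - x)), y - x⟫ t := by
  have hline : HasDerivAt (fun t : ℝ => x + t • (y - x)) (y - x) t := by
    simpa using ((hasDerivAt_id t).smul_const (y - x)).const_add x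
  have hf := ((hd (x + t • (y - x))).hasGradientAt).hasFDerivAt
  have := hf.comp_hasDerivAt t hline
  simpa [InnerProductSpace.toDual_apply_apply, Function.comp_def] using this

lemma GradsAux.convex_grad_le (f : E → ℝ) (hd : Differentiable ℝ f)
    (hc : ConvexOn ℝ Set.univ f) (x y : E) :
    f x + ⟪gradient f x, y - x⟫ ≤ f y := by
  set g : ℝ → ℝ := fun t => f (x + t • (y - x)) with hg
  have hgc : ConvexOn ℝ Set.univ g := by
    have := hc.comp_affineMap (AffineMap.lineMap x y : ℝ →ᵃ[ℝ] E)
    have heq : g = f ∘ (AffineMap.lineMap x y : ℝ →ᵃ[ℝ] E) := by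
      funext t
      simp [hg, AffineMap.lineMap_apply, Function.comp]
      rw [add_comm]
    rw [heq]
    simpa using this
  have hder : HasDerivAt g ⟪gradient f x, y - x⟫ 0 := by
    simpa using GradsAux.line_hasDerivAt f hd x y 0
  have hslope := hgc.le_slope_of_hasDerivAt (Set.mem_univ (0:ℝ)) (Set.mem_univ (1:ℝ))
    one_pos hder
  have h0 : g 0 = f x := by simp [hg]
  have h1 : g 1 = f y := by simp [hg]
  rw [slope_def_field] at hslope
  simp [h0, h1] at hslope
  have hh : ⟪gradient f x, y - x⟫ = (fderiv ℝ f x) y - (fderiv ℝ f x) x := by simp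
  linarith

lemma GradsAux.descent_lemma (f : E → ℝ) (hd : Differentiable ℝ f) (L : ℝ)
    (hlip : ∀ a b : E, ‖gradient f a - gradient f b‖ ≤ L * ‖a - b‖) (x y : E) :
    f y ≤ f x + ⟪gradient f x, y - x⟫ + L / 2 * ‖y - x‖ ^ 2 := by
  set c1 : ℝ := ⟪gradient f x, y - x⟫ with hc1
  set c2 : ℝ := ‖y - x‖ ^ 2 with hc2
  set φ : ℝ → ℝ := fun t => f (x + t • (y - x)) - t * c1 - L / 2 * t ^ 2 * c2 with hφ
  have hder : ∀ t : ℝ, HasDerivAt φ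
      (⟪gradient f (x + t • (y - x)), y - x⟫ - c1 - L / 2 * (2 * t) * c2) t := by
    intro t
    have h1 := GradsAux.line_hasDerivAt f hd x y t
    have h2 : HasDerivAt (fun t : ℝ => t * c1) c1 t := hasDerivAt_mul_const c1
    have h3 : HasDerivAt (fun t : ℝ => L / 2 * t ^ 2 * c2) (L / 2 * (2 * t) * c2) t := by
      have := ((hasDerivAt_pow 2 t).const_mul (L / 2)).mul_const c2
      simpa [mul_comm, mul_assoc, mul_left_comm] using this
    exact (h1.sub h2).sub h3
  have hanti : AntitoneOn φ (Set.Icc 0 1) := by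
    apply antitoneOn_of_deriv_nonpos (convex_Icc (0:ℝ) 1)
    · exact fun t _ => ((hder t).differentiableAt.continuousAt).continuousWithinAt
    · exact fun t _ => ((hder t).differentiableAt).differentiableWithinAt
    · intro t ht
      rw [interior_Icc] at ht
      rw [(hder t).deriv]
      have hineq : ⟪gradient f (x + t • (y - x)) - gradient f x, y - x⟫
          ≤ L * t * c2 := by
        calc ⟪gradient f (x + t • (y - x)) - gradient f x, y - x⟫
            ≤ ‖gradient f (x + t • (y - x)) - gradient f x‖ * ‖y - x‖ :=
              real_inner_le_norm _ _
          _ ≤ (L * ‖(x + t • (y - x)) - x‖) * ‖y - x‖ := by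
              gcongr; exact hlip _ _
          _ = L * t * c2 := by
              have : ‖(x + t • (y - x)) - x‖ = t * ‖y - x‖ := by
                simp [norm_smul, abs_of_pos ht.1]
              rw [this, hc2]; ring
      rw [inner_sub_left] at hineq
      rw [hc1]
      nlinarith [hineq]
  have h01 := hanti (Set.mem_Icc.mpr ⟨le_refl 0, zero_le_one⟩)
    (Set.mem_Icc.mpr ⟨zero_le_one, le_refl 1⟩) zero_le_one
  simp [hφ] at h01
  linarith

lemma GradsAux.cocoercive_aux (f : E → ℝ) (hd : Differentiable ℝ f)
    (hc : ConvexOn ℝ Set.univ f) (L : ℝ) (hL : 0 < L)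
    (hlip : ∀ a b : E, ‖gradient f a - gradient f b‖ ≤ L * ‖a - b‖) (x y : E) :
    f x + ⟪gradient f x, y - x⟫ + 1 / (2 * L) * ‖gradient f y - gradient f x‖ ^ 2 ≤ f y := by
  set d : E := gradient f y - gradient f x with hdd
  set z : E := y - L⁻¹ • d with hz
  have h1 := GradsAux.convex_grad_le f hd hc x z
  have h2 := GradsAux.descent_lemma f hd L hlip y z
  have e1 : ⟪gradient f x, z - x⟫ = ⟪gradient f x, y - x⟫ - L⁻¹ * ⟪gradient f x, d⟫ := by
    rw [hz]
    rw [show y - L⁻¹ • d - x = (y - x) - L⁻¹ • d by abel]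
    rw [inner_sub_right, real_inner_smul_right]
  have e2 : ⟪gradient f y, z - y⟫ = - (L⁻¹ * ⟪gradient f y, d⟫) := by
    rw [hz, show y - L⁻¹ • d - y = -(L⁻¹ • d) by abel, inner_neg_right, real_inner_smul_right]
  have e3 : ‖z - y‖ ^ 2 = L⁻¹ ^ 2 * ‖d‖ ^ 2 := by
    rw [hz, show y - L⁻¹ • d - y = -(L⁻¹ • d) by abel, norm_neg, norm_smul]
    rw [Real.norm_eq_abs, abs_of_pos (inv_pos.mpr hL)]
    ring
  have e4 : ⟪gradient f y, d⟫ - ⟪gradient f x, d⟫ = ‖d‖ ^ 2 := by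
    rw [← inner_sub_left, ← hdd, real_inner_self_eq_norm_sq]
  have key : f x + ⟪gradient f x, y - x⟫ - L⁻¹ * ⟪gradient f x, d⟫
      ≤ f y - L⁻¹ * ⟪gradient f y, d⟫ + L / 2 * (L⁻¹ ^ 2 * ‖d‖ ^ 2) := by
    calc f x + ⟪gradient f x, y - x⟫ - L⁻¹ * ⟪gradient f x, d⟫
        = f x + ⟪gradient f x, z - x⟫ := by rw [e1]; ring
      _ ≤ f z := h1
      _ ≤ f y + ⟪gradient f y, z - y⟫ + L / 2 * ‖z - y‖ ^ 2 := h2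
      _ = f y - L⁻¹ * ⟪gradient f y, d⟫ + L / 2 * (L⁻¹ ^ 2 * ‖d‖ ^ 2) := by
          rw [e2, e3]; ring
  have key2 : L / 2 * (L⁻¹ ^ 2 * ‖d‖ ^ 2) = 1 / (2 * L) * ‖d‖ ^ 2 := by
    field_simp
  have hL2 : L⁻¹ * ‖d‖ ^ 2 = 1 / (2 * L) * ‖d‖ ^ 2 + 1 / (2 * L) * ‖d‖ ^ 2 := by
    field_simp
    ring
  have e4' : L⁻¹ * ⟪gradient f y, d⟫ - L⁻¹ * ⟪gradient f x, d⟫ = L⁻¹ * ‖d‖ ^ 2 := by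
    rw [← mul_sub, e4]
  linarith [key, key2, hL2, e4']

lemma GradsAux.cocoercive (f : E → ℝ) (hd : Differentiable ℝ f)
    (hc : ConvexOn ℝ Set.univ f) (L : ℝ) (hL : 0 < L)
    (hlip : ∀ a b : E, ‖gradient f a - gradient f b‖ ≤ L * ‖a - b‖) (x y : E) :
    L⁻¹ * ‖gradient f x - gradient f y‖ ^ 2 ≤ ⟪gradient f x - gradient f y, x - y⟫ := by
  have h1 := GradsAux.cocoercive_aux f hd hc L hL hlip x y
  have h2 := GradsAux.cocoercive_aux f hd hc L hL hlip y x
  have e1 : ‖gradient f y - gradient f x‖ = ‖gradient f x - gradient f y‖ := norm_sub_rev _ _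
  have e2 : ⟪gradient f x, y - x⟫ + ⟪gradient f y, x - y⟫
      = - ⟪gradient f x - gradient f y, x - y⟫ := by
    rw [inner_sub_left]
    rw [show y - x = -(x - y) by abel, inner_neg_right]
    ring
  have h4 : 1 / (2 * L) * ‖gradient f x - gradient f y‖ ^ 2
      + 1 / (2 * L) * ‖gradient f x - gradient f y‖ ^ 2
      = L⁻¹ * ‖gradient f x - gradient f y‖ ^ 2 := by
    rw [← add_mul]
    congr 1
    field_simp
    norm_num
  rw [e1] at h1
  linarith [h1, h2, e2, h4]

lemma GradsAux.sum_eval_fixed {M : Type*} [AddCommMonoid M] {n N : ℕ} (j : Fin n)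
    (v : Fin N → M) :
    ∑ s : Fin n → Fin N, v (s j) = (N ^ (n-1)) • ∑ i, v i := by
  classical
  rw [← Equiv.sum_comp (Equiv.funSplitAt j (Fin N)).symm (fun s => v (s j))]
  have hp : ∀ p : Fin N × ({k : Fin n // k ≠ j} → Fin N),
      ((Equiv.funSplitAt j (Fin N)).symm p) j = p.1 := by
    intro p
    simp [Equiv.funSplitAt, Equiv.piSplitAt]
  simp only [hp]
  rw [Fintype.sum_prod_type]
  simp only [Finset.sum_const, Finset.card_univ]
  rw [← Finset.smul_sum]
  congr 1
  rw [Fintype.card_fun]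
  congr 1
  · simp
  · rw [Fintype.card_subtype_compl]
    simp [Fintype.card_subtype_eq]

end AuxGrads

/-- Theorem 2 (GraDS, K-step form). -/
theorem grads_K_step
    (d N n K : ℕ) (hN : 1 ≤ N) (hn : 1 ≤ n)
    (f : Fin N → EuclideanSpace ℝ (Fin d) → ℝ)
    (hdiff : ∀ i, Differentiable ℝ (f i))
    (hconv : ∀ i, ConvexOn ℝ Set.univ (f i))
    (L : ℝ) (hL : 0 < L)
    (hsmooth : ∀ i (x y : EuclideanSpace ℝ (Fin d)),
      ‖gradient (f i) x - gradient (f i) y‖ ≤ L * ‖x - y‖)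
    (μ : ℝ) (hμ : 0 < μ)
    (xstar : EuclideanSpace ℝ (Fin d))
    (hsc : ∀ x y : EuclideanSpace ℝ (Fin d),
      (N : ℝ)⁻¹ * ∑ i, f i x
        + ⟪gradient (fun z => (N : ℝ)⁻¹ * ∑ i, f i z) x, y - x⟫
        + μ / 2 * ‖y - x‖ ^ 2 ≤ (N : ℝ)⁻¹ * ∑ i, f i y)
    (hmin : ∀ y, (N : ℝ)⁻¹ * ∑ i, f i xstar ≤ (N : ℝ)⁻¹ * ∑ i, f i y)
    (H : (Fin n → Fin N) → EuclideanSpace ℝ (Fin d) → EuclideanSpace ℝ (Fin d))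
    (hH : ∀ s x, H s x
      = (n : ℝ)⁻¹ • ∑ j, (gradient (f (s j)) x - gradient (f (s j)) xstar))
    (γ : (Fin n → Fin N) → EuclideanSpace ℝ (Fin d) → ℝ)
    (hγ : ∀ s x, γ s x
      = ((n : ℝ)⁻¹ * ∑ j, ‖gradient (f (s j)) x - gradient (f (s j)) xstar‖ ^ 2)
          / ‖H s x‖ ^ 2)
    (hHne : ∀ x, x ≠ xstar → ∀ s, H s x ≠ 0)
    (γmin : ℝ) (hγmin : 0 < γmin) (hμγ : μ * γmin ≤ L)
    (hlb : ∀ x, x ≠ xstar → ∀ s, γmin ≤ γ s x)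
    (x0 : EuclideanSpace ℝ (Fin d))
    (X : (Fin K → Fin n → Fin N) → ℕ → EuclideanSpace ℝ (Fin d))
    (hX0 : ∀ S, X S 0 = x0)
    (hXstep : ∀ S (k : Fin K),
      X S (k.val + 1)
        = X S k.val - (L⁻¹ * γ (S k) (X S k.val)) • H (S k) (X S k.val)) :
    (((N : ℝ) ^ n) ^ K)⁻¹ * ∑ S : Fin K → Fin n → Fin N, ‖X S K - xstar‖ ^ 2
      ≤ (1 - γmin * μ / L) ^ K * ‖x0 - xstar‖ ^ 2 := by
  classical
  have hNpos : (0:ℝ) < N := by exact_mod_cast hN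
  have hnpos : (0:ℝ) < n := by exact_mod_cast hn
  have hρ : 0 ≤ 1 - γmin * μ / L := by
    rw [sub_nonneg, div_le_one hL]
    linarith [hμγ]
  -- gradient of the average
  have hFgrad : ∀ x : EuclideanSpace ℝ (Fin d),
      gradient (fun z => (N : ℝ)⁻¹ * ∑ i, f i z) x = (N:ℝ)⁻¹ • ∑ i, gradient (f i) x := by
    intro x
    have hsum : HasFDerivAt (fun z : EuclideanSpace ℝ (Fin d) => ∑ i, f i z)
        (∑ i, InnerProductSpace.toDual ℝ _ (gradient (f i) x)) x :=
      HasFDerivAt.fun_sum (fun i _ => ((hdiff i x).hasGradientAt).hasFDerivAt)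
    have hmul : HasFDerivAt (fun z : EuclideanSpace ℝ (Fin d) => (N : ℝ)⁻¹ * ∑ i, f i z)
        ((N:ℝ)⁻¹ • ∑ i, InnerProductSpace.toDual ℝ _ (gradient (f i) x)) x :=
      hsum.const_mul _
    have heq : ((N:ℝ)⁻¹ • ∑ i, InnerProductSpace.toDual ℝ (EuclideanSpace ℝ (Fin d))
          (gradient (f i) x))
        = InnerProductSpace.toDual ℝ _ ((N:ℝ)⁻¹ • ∑ i, gradient (f i) x) := by
      rw [map_smul, map_sum]
    rw [heq] at hmul
    exact (hasGradientAt_iff_hasFDerivAt.mpr hmul).gradient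
  -- strong monotonicity of the gradient of the average
  have SM : ∀ x : EuclideanSpace ℝ (Fin d),
      (N:ℝ) * μ * ‖x - xstar‖ ^ 2
        ≤ ∑ i, ⟪gradient (f i) x - gradient (f i) xstar, x - xstar⟫ := by
    intro x
    have ha := hsc x xstar
    have hb := hsc xstar x
    rw [hFgrad] at ha hb
    have e1 : ⟪(N:ℝ)⁻¹ • ∑ i, gradient (f i) x, xstar - x⟫
        = -((N:ℝ)⁻¹ * ∑ i, ⟪gradient (f i) x, x - xstar⟫) := by
      rw [real_inner_smul_left, show xstar - x = -(x - xstar) by abel, inner_neg_right,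
        sum_inner]
      ring
    have e2 : ⟪(N:ℝ)⁻¹ • ∑ i, gradient (f i) xstar, x - xstar⟫
        = (N:ℝ)⁻¹ * ∑ i, ⟪gradient (f i) xstar, x - xstar⟫ := by
      rw [real_inner_smul_left, sum_inner]
    have e3 : ‖xstar - x‖ = ‖x - xstar‖ := norm_sub_rev _ _
    rw [e1, e3] at ha
    rw [e2] at hb
    have hmain : μ * ‖x - xstar‖ ^ 2
        ≤ (N:ℝ)⁻¹ * ∑ i, ⟪gradient (f i) x, x - xstar⟫
          - (N:ℝ)⁻¹ * ∑ i, ⟪gradient (f i) xstar, x - xstar⟫ := by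
      linarith [ha, hb]
    have hcast : ∑ i, ⟪gradient (f i) x - gradient (f i) xstar, x - xstar⟫
        = (∑ i, ⟪gradient (f i) x, x - xstar⟫)
          - ∑ i, ⟪gradient (f i) xstar, x - xstar⟫ := by
      rw [← Finset.sum_sub_distrib]
      exact Finset.sum_congr rfl fun i _ => by rw [inner_sub_left]
    rw [hcast]
    have := mul_le_mul_of_nonneg_left hmain (le_of_lt hNpos)
    calc (N:ℝ) * μ * ‖x - xstar‖ ^ 2 = (N:ℝ) * (μ * ‖x - xstar‖ ^ 2) := by ring
      _ ≤ (N:ℝ) * ((N:ℝ)⁻¹ * ∑ i, ⟪gradient (f i) x, x - xstar⟫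
          - (N:ℝ)⁻¹ * ∑ i, ⟪gradient (f i) xstar, x - xstar⟫) := this
      _ = ((N:ℝ) * (N:ℝ)⁻¹) * ((∑ i, ⟪gradient (f i) x, x - xstar⟫)
          - ∑ i, ⟪gradient (f i) xstar, x - xstar⟫) := by ring
      _ = (∑ i, ⟪gradient (f i) x, x - xstar⟫)
          - ∑ i, ⟪gradient (f i) xstar, x - xstar⟫ := by
          rw [mul_inv_cancel₀ (ne_of_gt hNpos), one_mul]
  have hcardfun : ((Fintype.card (Fin n → Fin N)) : ℝ) = (N:ℝ)^n := by
    rw [Fintype.card_fun]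
    push_cast
    simp
  -- per-minibatch one-step bound, summed over minibatches
  have persum : ∀ x : EuclideanSpace ℝ (Fin d),
      ∑ s : Fin n → Fin N, ‖x - (L⁻¹ * γ s x) • H s x - xstar‖ ^ 2
        ≤ (1 - γmin * μ / L) * (N:ℝ)^n * ‖x - xstar‖ ^ 2 := by
    intro x
    by_cases hx : x = xstar
    · have hH0 : ∀ s : Fin n → Fin N, H s x = 0 := by
        intro s; rw [hH, hx]; simp
      have hzero : ∑ s : Fin n → Fin N, ‖x - (L⁻¹ * γ s x) • H s x - xstar‖ ^ 2 = 0 := by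
        apply Finset.sum_eq_zero
        intro s _
        rw [hH0, smul_zero, sub_zero, hx, sub_self]
        simp
      rw [hzero, hx, sub_self]
      simp
    · have pts : ∀ s : Fin n → Fin N,
          ‖x - (L⁻¹ * γ s x) • H s x - xstar‖ ^ 2
            ≤ ‖x - xstar‖ ^ 2 - (γmin / L) * ⟪H s x, x - xstar⟫ := by
        intro s
        have hHsne : H s x ≠ 0 := hHne x hx s
        have hHsq : ‖H s x‖ ^ 2 ≠ 0 := pow_ne_zero _ (norm_ne_zero_iff.mpr hHsne)
        have hA : γ s x * ‖H s x‖ ^ 2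
            = (n:ℝ)⁻¹ * ∑ j, ‖gradient (f (s j)) x - gradient (f (s j)) xstar‖ ^ 2 := by
          rw [hγ]
          exact div_mul_cancel₀ _ hHsq
        have hinner : ⟪H s x, x - xstar⟫
            = (n:ℝ)⁻¹ * ∑ j, ⟪gradient (f (s j)) x - gradient (f (s j)) xstar, x - xstar⟫ := by
          rw [hH, real_inner_smul_left, sum_inner]
        have hco : ∀ j : Fin n,
            L⁻¹ * ‖gradient (f (s j)) x - gradient (f (s j)) xstar‖ ^ 2
              ≤ ⟪gradient (f (s j)) x - gradient (f (s j)) xstar, x - xstar⟫ :=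
          fun j => GradsAux.cocoercive (f (s j)) (hdiff _) (hconv _) L hL
            (fun a b => hsmooth _ a b) x xstar
        have h1 : L⁻¹ * (γ s x * ‖H s x‖ ^ 2) ≤ ⟪H s x, x - xstar⟫ := by
          have hsum_le : ∑ j, L⁻¹ * ‖gradient (f (s j)) x - gradient (f (s j)) xstar‖ ^ 2
              ≤ ∑ j, ⟪gradient (f (s j)) x - gradient (f (s j)) xstar, x - xstar⟫ :=
            Finset.sum_le_sum fun j _ => hco j
          have hrw : L⁻¹ * (γ s x * ‖H s x‖ ^ 2)
              = (n:ℝ)⁻¹ * ∑ j, L⁻¹ * ‖gradient (f (s j)) x - gradient (f (s j)) xstar‖ ^ 2 := by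
            rw [hA]
            simp only [Finset.mul_sum]
            exact Finset.sum_congr rfl fun j _ => by ring
          rw [hrw, hinner]
          exact mul_le_mul_of_nonneg_left hsum_le (by positivity)
        have hγpos : 0 < γ s x := lt_of_lt_of_le hγmin (hlb x hx s)
        have hip : 0 ≤ ⟪H s x, x - xstar⟫ := le_trans (by positivity) h1
        have hexp : ‖x - (L⁻¹ * γ s x) • H s x - xstar‖ ^ 2
            = ‖x - xstar‖ ^ 2 - 2 * ((L⁻¹ * γ s x) * ⟪H s x, x - xstar⟫)
              + (L⁻¹ * γ s x) ^ 2 * ‖H s x‖ ^ 2 := by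
          rw [show x - (L⁻¹ * γ s x) • H s x - xstar
              = (x - xstar) - (L⁻¹ * γ s x) • H s x by abel]
          rw [norm_sub_sq_real, real_inner_smul_right, norm_smul, Real.norm_eq_abs, mul_pow,
            sq_abs, real_inner_comm]
        have hq : (L⁻¹ * γ s x) ^ 2 * ‖H s x‖ ^ 2
            ≤ (L⁻¹ * γ s x) * ⟪H s x, x - xstar⟫ := by
          have h2 : (L⁻¹ * γ s x) ^ 2 * ‖H s x‖ ^ 2
              = (L⁻¹ * γ s x) * (L⁻¹ * (γ s x * ‖H s x‖ ^ 2)) := by ring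
          rw [h2]
          exact mul_le_mul_of_nonneg_left h1 (by positivity)
        have hcc : γmin / L ≤ L⁻¹ * γ s x := by
          rw [div_eq_inv_mul]
          exact mul_le_mul_of_nonneg_left (hlb x hx s) (by positivity)
        have hfin : (γmin / L) * ⟪H s x, x - xstar⟫ ≤ (L⁻¹ * γ s x) * ⟪H s x, x - xstar⟫ :=
          mul_le_mul_of_nonneg_right hcc hip
        linarith [hexp, hq, hfin]
      have hsumH : (N:ℝ)^n * (μ * ‖x - xstar‖ ^ 2)
          ≤ ⟪∑ s : Fin n → Fin N, H s x, x - xstar⟫ := by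
        have hHeq : ∑ s : Fin n → Fin N, H s x
            = ((N:ℝ)^(n-1)) • ∑ i, (gradient (f i) x - gradient (f i) xstar) := by
          calc ∑ s : Fin n → Fin N, H s x
              = ∑ s : Fin n → Fin N,
                  (n:ℝ)⁻¹ • ∑ j, (gradient (f (s j)) x - gradient (f (s j)) xstar) :=
                Finset.sum_congr rfl fun s _ => hH s x
            _ = (n:ℝ)⁻¹ • ∑ s : Fin n → Fin N,
                  ∑ j, (gradient (f (s j)) x - gradient (f (s j)) xstar) :=
                (Finset.smul_sum).symm
            _ = (n:ℝ)⁻¹ • ∑ j : Fin n, ∑ s : Fin n → Fin N,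
                  (gradient (f (s j)) x - gradient (f (s j)) xstar) := by
                rw [Finset.sum_comm]
            _ = (n:ℝ)⁻¹ • ∑ j : Fin n,
                  (N^(n-1)) • ∑ i, (gradient (f i) x - gradient (f i) xstar) := by
                congr 1
                exact Finset.sum_congr rfl fun j _ => GradsAux.sum_eval_fixed j
                  (fun i => gradient (f i) x - gradient (f i) xstar)
            _ = ((N:ℝ)^(n-1)) • ∑ i, (gradient (f i) x - gradient (f i) xstar) := by
                rw [Finset.sum_const, Finset.card_univ, Fintype.card_fin]
                rw [← Nat.cast_smul_eq_nsmul ℝ, ← Nat.cast_smul_eq_nsmul ℝ, smul_smul, smul_smul]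
                congr 1
                push_cast
                field_simp
        rw [hHeq, real_inner_smul_left, sum_inner]
        have hSM := SM x
        have hpow : (N:ℝ)^(n-1) * ((N:ℝ) * μ * ‖x - xstar‖ ^ 2)
            = (N:ℝ)^n * (μ * ‖x - xstar‖ ^ 2) := by
          rw [show (N:ℝ)^(n-1) * ((N:ℝ) * μ * ‖x - xstar‖ ^ 2)
              = ((N:ℝ)^(n-1) * (N:ℝ)) * (μ * ‖x - xstar‖ ^ 2) by ring, ← pow_succ]
          congr 2
          omega
        calc (N:ℝ)^n * (μ * ‖x - xstar‖ ^ 2)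
            = (N:ℝ)^(n-1) * ((N:ℝ) * μ * ‖x - xstar‖ ^ 2) := hpow.symm
          _ ≤ (N:ℝ)^(n-1)
              * ∑ i, ⟪gradient (f i) x - gradient (f i) xstar, x - xstar⟫ :=
              mul_le_mul_of_nonneg_left hSM (by positivity)
      calc ∑ s : Fin n → Fin N, ‖x - (L⁻¹ * γ s x) • H s x - xstar‖ ^ 2
          ≤ ∑ s : Fin n → Fin N,
              (‖x - xstar‖ ^ 2 - (γmin / L) * ⟪H s x, x - xstar⟫) :=
            Finset.sum_le_sum fun s _ => pts s
        _ = (N:ℝ)^n * ‖x - xstar‖ ^ 2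
            - (γmin / L) * ⟪∑ s : Fin n → Fin N, H s x, x - xstar⟫ := by
            rw [Finset.sum_sub_distrib, Finset.sum_const, Finset.card_univ, nsmul_eq_mul,
              hcardfun, sum_inner, ← Finset.mul_sum]
        _ ≤ (N:ℝ)^n * ‖x - xstar‖ ^ 2
            - (γmin / L) * ((N:ℝ)^n * (μ * ‖x - xstar‖ ^ 2)) := by
            have := mul_le_mul_of_nonneg_left hsumH
              (show (0:ℝ) ≤ γmin / L by positivity)
            linarith
        _ = (1 - γmin * μ / L) * (N:ℝ)^n * ‖x - xstar‖ ^ 2 := by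
            field_simp
  -- the iterates depend only on the minibatches already used
  have Xdep : ∀ m : ℕ, m ≤ K → ∀ S S' : Fin K → Fin n → Fin N,
      (∀ j : Fin K, (j:ℕ) < m → S j = S' j) → X S m = X S' m := by
    intro m
    induction m with
    | zero => intro _ S S' _; rw [hX0, hX0]
    | succ m ih =>
      intro hm S S' hag
      have hmK : m < K := hm
      have h1 : X S m = X S' m :=
        ih (le_of_lt hmK) S S' (fun j hj => hag j (Nat.lt_succ_of_lt hj))
      have h2 : S ⟨m, hmK⟩ = S' ⟨m, hmK⟩ := hag ⟨m, hmK⟩ (Nat.lt_succ_self m)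
      have e1 : X S (m + 1)
          = X S m - (L⁻¹ * γ (S ⟨m, hmK⟩) (X S m)) • H (S ⟨m, hmK⟩) (X S m) :=
        hXstep S ⟨m, hmK⟩
      have e2 : X S' (m + 1)
          = X S' m - (L⁻¹ * γ (S' ⟨m, hmK⟩) (X S' m)) • H (S' ⟨m, hmK⟩) (X S' m) :=
        hXstep S' ⟨m, hmK⟩
      rw [e1, e2, h1, h2]
  -- main induction
  have key : ∀ m : ℕ, m ≤ K →
      ∑ S : Fin K → Fin n → Fin N, ‖X S m - xstar‖ ^ 2
        ≤ (1 - γmin * μ / L) ^ m * ((N:ℝ)^n)^K * ‖x0 - xstar‖ ^ 2 := by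
    intro m
    induction m with
    | zero =>
      intro _
      have hcardK : ((Fintype.card (Fin K → Fin n → Fin N)) : ℝ) = ((N:ℝ)^n)^K := by
        rw [Fintype.card_fun, Fintype.card_fun]
        push_cast
        simp
      rw [Finset.sum_congr rfl fun S _ => by rw [hX0]]
      rw [Finset.sum_const, Finset.card_univ, nsmul_eq_mul, hcardK, pow_zero, one_mul]
    | succ m ih =>
      intro hm1
      have hmK : m < K := hm1
      set k : Fin K := ⟨m, hmK⟩ with hk
      have hstep : ∀ S : Fin K → Fin n → Fin N,
          X S (m+1) = X S m - (L⁻¹ * γ (S k) (X S m)) • H (S k) (X S m) :=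
        fun S => hXstep S k
      set eq1 := Equiv.funSplitAt k (Fin n → Fin N) with heq1
      set t0 : Fin n → Fin N := fun _ => ⟨0, hN⟩ with ht0
      set Y : ({j : Fin K // j ≠ k} → Fin n → Fin N) → EuclideanSpace ℝ (Fin d) :=
        fun rest => X (eq1.symm (t0, rest)) m with hY
      have hYe : ∀ (t : Fin n → Fin N) rest, X (eq1.symm (t, rest)) m = Y rest := by
        intro t rest
        show X (eq1.symm (t, rest)) m = X (eq1.symm (t0, rest)) m
        apply Xdep m (le_of_lt hmK)
        intro j hj
        have hjk : j ≠ k := by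
          intro hjq
          rw [hjq] at hj
          simp only [hk] at hj
          exact lt_irrefl _ hj
        show eq1.symm (t, rest) j = eq1.symm (t0, rest) j
        simp [heq1, Equiv.funSplitAt, Equiv.piSplitAt, dif_neg hjk]
      have hkap : ∀ (t : Fin n → Fin N) rest, eq1.symm (t, rest) k = t := by
        intro t rest
        simp [heq1, Equiv.funSplitAt, Equiv.piSplitAt]
      calc ∑ S : Fin K → Fin n → Fin N, ‖X S (m+1) - xstar‖ ^ 2
          = ∑ p : (Fin n → Fin N) × ({j : Fin K // j ≠ k} → Fin n → Fin N),
              ‖X (eq1.symm p) (m+1) - xstar‖ ^ 2 :=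
            (Equiv.sum_comp eq1.symm (fun S => ‖X S (m+1) - xstar‖ ^ 2)).symm
        _ = ∑ rest : {j : Fin K // j ≠ k} → Fin n → Fin N, ∑ t : Fin n → Fin N,
              ‖Y rest - (L⁻¹ * γ t (Y rest)) • H t (Y rest) - xstar‖ ^ 2 := by
            rw [Fintype.sum_prod_type, Finset.sum_comm]
            refine Finset.sum_congr rfl fun rest _ => Finset.sum_congr rfl fun t _ => ?_
            rw [hstep, hkap, hYe]
        _ ≤ ∑ rest : {j : Fin K // j ≠ k} → Fin n → Fin N,
              ((1 - γmin * μ / L) * (N:ℝ)^n * ‖Y rest - xstar‖ ^ 2) :=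
            Finset.sum_le_sum fun rest _ => persum (Y rest)
        _ = (1 - γmin * μ / L) * ∑ S : Fin K → Fin n → Fin N, ‖X S m - xstar‖ ^ 2 := by
            have h2 : ∑ S : Fin K → Fin n → Fin N, ‖X S m - xstar‖ ^ 2
                = ∑ rest : {j : Fin K // j ≠ k} → Fin n → Fin N, ∑ t : Fin n → Fin N,
                    ‖Y rest - xstar‖ ^ 2 := by
              rw [← Equiv.sum_comp eq1.symm (fun S => ‖X S m - xstar‖ ^ 2),
                Fintype.sum_prod_type, Finset.sum_comm]
              exact Finset.sum_congr rfl fun rest _ =>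
                Finset.sum_congr rfl fun t _ => by rw [hYe]
            rw [h2, Finset.mul_sum]
            refine Finset.sum_congr rfl fun rest _ => ?_
            rw [Finset.sum_const, Finset.card_univ, nsmul_eq_mul, hcardfun]
            ring
        _ ≤ (1 - γmin * μ / L)
              * ((1 - γmin * μ / L) ^ m * ((N:ℝ)^n)^K * ‖x0 - xstar‖ ^ 2) :=
            mul_le_mul_of_nonneg_left (ih (le_of_lt hmK)) hρ
        _ = (1 - γmin * μ / L) ^ (m+1) * ((N:ℝ)^n)^K * ‖x0 - xstar‖ ^ 2 := by ring
  have hK := key K le_rfl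
  have hcpos : (0:ℝ) < ((N:ℝ)^n)^K := by positivity
  rw [inv_mul_le_iff₀ hcpos]
  calc ∑ S : Fin K → Fin n → Fin N, ‖X S K - xstar‖ ^ 2
      ≤ (1 - γmin * μ / L) ^ K * ((N:ℝ)^n)^K * ‖x0 - xstar‖ ^ 2 := hK
    _ = ((N:ℝ)^n)^K * ((1 - γmin * μ / L) ^ K * ‖x0 - xstar‖ ^ 2) := by ring
end

section
/- (Eq. (12): the adaptive step size for consistent linear systems dominates 1/L_f.) Let a_1, …, a_n be unit vectors in EuclideanSpace ℝ (Fin m), let x* be a point, set b_i = ⟨a_i, x*⟩, and let A : EuclideanSpace ℝ (Fin m) →L[ℝ] EuclideanSpace ℝ (Fin n) be the continuous linear map y ↦ (⟨a_i, y⟩)_i, with operator norm ‖A‖. Then for every x with (1/n)·∑_i (⟨a_i, x⟩ − b_i)·a_i ≠ 0, the adaptive step size satisfies [(1/n)·∑_i (⟨a_i, x⟩ − b_i)²] / ‖(1/n)·∑_i (⟨a_i, x⟩ − b_i)·a_i‖² ≥ n/‖A‖². -/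
open scoped BigOperators RealInnerProductSpace

/-- Eq. (12): for consistent linear systems with normalized rows, the adaptive
(ScaG) step size dominates `1/L_f = n/‖A‖²`. -/
theorem scag_stepsize_ge_inv_Lf
    (m n : ℕ) (hn : 1 ≤ n)
    (a : Fin n → EuclideanSpace ℝ (Fin m)) (ha : ∀ i, ‖a i‖ = 1)
    (xstar : EuclideanSpace ℝ (Fin m))
    (b : Fin n → ℝ) (hb : ∀ i, b i = ⟪a i, xstar⟫)
    (A : EuclideanSpace ℝ (Fin m) →L[ℝ] EuclideanSpace ℝ (Fin n))
    (hA : ∀ (y : EuclideanSpace ℝ (Fin m)) (i : Fin n), A y i = ⟪a i, y⟫)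
    (x : EuclideanSpace ℝ (Fin m))
    (hx : (n : ℝ)⁻¹ • ∑ i, (⟪a i, x⟫ - b i) • a i ≠ 0) :
    (n : ℝ) / ‖A‖ ^ 2
      ≤ ((n : ℝ)⁻¹ * ∑ i, (⟪a i, x⟫ - b i) ^ 2)
          / ‖(n : ℝ)⁻¹ • ∑ i, (⟪a i, x⟫ - b i) • a i‖ ^ 2 := by
  set r : Fin n → ℝ := fun i => ⟪a i, x⟫ - b i with hr
  set g : EuclideanSpace ℝ (Fin m) := ∑ i, r i • a i with hg
  have hnpos : (0 : ℝ) < n := by exact_mod_cast hn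
  have hninv : (0 : ℝ) < (n : ℝ)⁻¹ := by positivity
  have hgne : g ≠ 0 := by
    intro h
    apply hx
    rw [h, smul_zero]
  have hgpos : (0 : ℝ) < ‖g‖ := norm_pos_iff.mpr hgne
  -- the residual vector in EuclideanSpace
  set rv : EuclideanSpace ℝ (Fin n) := (WithLp.equiv 2 (Fin n → ℝ)).symm r with hrv
  have hinner : ⟪rv, A g⟫ = ‖g‖ ^ 2 := by
    have h1 : ⟪rv, A g⟫ = ∑ i, r i * ⟪a i, g⟫ := by
      rw [PiLp.inner_apply]
      refine Finset.sum_congr rfl fun i _ => ?_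
      simp [hrv, hA, RCLike.inner_apply, mul_comm]
    have h2 : ⟪g, g⟫ = ∑ i, r i * ⟪a i, g⟫ := by
      rw [hg, sum_inner]
      refine Finset.sum_congr rfl fun i _ => ?_
      rw [real_inner_smul_left]
    rw [h1, ← h2, real_inner_self_eq_norm_sq]
  have hrvnorm : ‖rv‖ ^ 2 = ∑ i, r i ^ 2 := by
    rw [← real_inner_self_eq_norm_sq, PiLp.inner_apply]
    refine Finset.sum_congr rfl fun i _ => ?_
    simp [hrv, RCLike.inner_apply, sq]
  -- key bound : ‖g‖ ≤ ‖A‖ * ‖rv‖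
  have hkey : ‖g‖ ^ 2 ≤ ‖rv‖ * (‖A‖ * ‖g‖) := by
    calc ‖g‖ ^ 2 = ⟪rv, A g⟫ := hinner.symm
      _ ≤ ‖rv‖ * ‖A g‖ := real_inner_le_norm _ _
      _ ≤ ‖rv‖ * (‖A‖ * ‖g‖) := by
          exact mul_le_mul_of_nonneg_left (A.le_opNorm g) (norm_nonneg _)
  have hgle : ‖g‖ ≤ ‖A‖ * ‖rv‖ := by
    have := hkey
    rw [sq] at this
    nlinarith [norm_nonneg g, norm_nonneg rv, norm_nonneg A]
  have hApos : (0 : ℝ) < ‖A‖ := by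
    by_contra h
    push_neg at h
    have : ‖A‖ = 0 := le_antisymm h (norm_nonneg _)
    rw [this, zero_mul] at hgle
    linarith
  have hsq : ‖g‖ ^ 2 ≤ ‖A‖ ^ 2 * ∑ i, r i ^ 2 := by
    have := mul_le_mul hgle hgle (norm_nonneg _) (by positivity)
    calc ‖g‖ ^ 2 = ‖g‖ * ‖g‖ := sq ‖g‖
      _ ≤ (‖A‖ * ‖rv‖) * (‖A‖ * ‖rv‖) := this
      _ = ‖A‖ ^ 2 * ‖rv‖ ^ 2 := by ring
      _ = ‖A‖ ^ 2 * ∑ i, r i ^ 2 := by rw [hrvnorm]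
  -- now arithmetic
  have hnorm_smul : ‖(n : ℝ)⁻¹ • g‖ = (n : ℝ)⁻¹ * ‖g‖ := by
    rw [norm_smul, Real.norm_eq_abs, abs_of_pos hninv]
  rw [hnorm_smul]
  rw [div_le_div_iff₀ (by positivity) (by positivity)]
  have : ((n:ℝ)⁻¹ * ‖g‖) ^ 2 = (n:ℝ)⁻¹ * ((n:ℝ)⁻¹ * ‖g‖^2) := by ring
  rw [this]
  have h2 : (n : ℝ) * ((n:ℝ)⁻¹ * ‖g‖^2) = ‖g‖^2 := by
    field_simp
  calc (n:ℝ) * ((n:ℝ)⁻¹ * ((n:ℝ)⁻¹ * ‖g‖^2)) = (n:ℝ)⁻¹ * ((n:ℝ) * ((n:ℝ)⁻¹ * ‖g‖^2)) := by ring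
    _ = (n:ℝ)⁻¹ * ‖g‖^2 := by rw [h2]
    _ ≤ (n:ℝ)⁻¹ * (‖A‖^2 * ∑ i, r i ^ 2) := by
        exact mul_le_mul_of_nonneg_left hsq (le_of_lt hninv)
    _ = (n:ℝ)⁻¹ * (∑ i, r i ^ 2) * ‖A‖^2 := by ring
end

section
/- (One-step exact convergence of ScaG along eigenvectors.) Let a_1, …, a_n be unit vectors in EuclideanSpace ℝ (Fin m), x* a point, b_i = ⟨a_i, x*⟩. Suppose x ∈ EuclideanSpace ℝ (Fin m) is such that v = x − x* is an eigenvector of the map v ↦ ∑_i ⟨a_i, v⟩·a_i with eigenvalue λ > 0 (i.e. ∑_i ⟨a_i, v⟩·a_i = λ·v and v ≠ 0). Then one step of gradient descent with the adaptive step size lands exactly at the solution: x − γ(x)·∇f(x) = x*, where ∇f(x) = (1/n)·∑_i (⟨a_i, x⟩ − b_i)·a_i and γ(x) = [(1/n)·∑_i (⟨a_i, x⟩ − b_i)²] / ‖∇f(x)‖². -/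
open scoped BigOperators RealInnerProductSpace

/-- One-step exact convergence of ScaG along eigenvectors of `v ↦ ∑ᵢ ⟪aᵢ, v⟫ aᵢ`. -/
theorem scag_one_step_eigenvector
    (m n : ℕ) (hn : 1 ≤ n)
    (a : Fin n → EuclideanSpace ℝ (Fin m)) (ha : ∀ i, ‖a i‖ = 1)
    (xstar : EuclideanSpace ℝ (Fin m))
    (b : Fin n → ℝ) (hb : ∀ i, b i = ⟪a i, xstar⟫)
    (x : EuclideanSpace ℝ (Fin m)) (lam : ℝ) (hlam : 0 < lam)
    (hv : x - xstar ≠ 0)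
    (heig : ∑ i, ⟪a i, x - xstar⟫ • a i = lam • (x - xstar)) :
    x - (((n : ℝ)⁻¹ * ∑ i, (⟪a i, x⟫ - b i) ^ 2)
          / ‖(n : ℝ)⁻¹ • ∑ i, (⟪a i, x⟫ - b i) • a i‖ ^ 2)
        • ((n : ℝ)⁻¹ • ∑ i, (⟪a i, x⟫ - b i) • a i) = xstar := by
  set v := x - xstar with hvdef
  have hc : ∀ i, ⟪a i, x⟫ - b i = ⟪a i, v⟫ := by
    intro i; rw [hb i, hvdef, inner_sub_right]
  have hsum : ∑ i, (⟪a i, x⟫ - b i) • a i = lam • v := by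
    simp_rw [hc]; exact heig
  have hsq : ∑ i, (⟪a i, x⟫ - b i) ^ 2 = lam * ‖v‖ ^ 2 := by
    have h1 := congrArg (fun w => (⟪w, v⟫ : ℝ)) hsum
    simp only [sum_inner, real_inner_smul_left, real_inner_self_eq_norm_sq, hc,
      ← pow_two] at h1
    simp_rw [hc]
    exact h1
  have hn0 : (n : ℝ) ≠ 0 := Nat.cast_ne_zero.mpr (by omega)
  have hnv : ‖v‖ ≠ 0 := norm_ne_zero_iff.mpr hv
  have hnorm : ‖(n : ℝ)⁻¹ • ∑ i, (⟪a i, x⟫ - b i) • a i‖ ^ 2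
      = ((n : ℝ)⁻¹ * lam) ^ 2 * ‖v‖ ^ 2 := by
    rw [hsum, smul_smul, norm_smul, mul_pow, Real.norm_eq_abs, sq_abs]
  have hco : (n : ℝ)⁻¹ * (lam * ‖v‖ ^ 2) / (((n : ℝ)⁻¹ * lam) ^ 2 * ‖v‖ ^ 2)
      * (n : ℝ)⁻¹ * lam = 1 := by
    field_simp
  rw [hsq, hnorm, hsum, smul_smul, smul_smul, hco, one_smul, hvdef, sub_sub_cancel]
end

section
/- (StoPS and GraDS coincide for consistent linear systems with normalized rows.) Let a_1, …, a_n be unit vectors in EuclideanSpace ℝ (Fin m), x* a point, b_i = ⟨a_i, x*⟩, and f_i(x) = (1/2)·(⟨a_i, x⟩ − b_i)² with ∇f_i(x) = (⟨a_i, x⟩ − b_i)·a_i. Then for every x with ḡ(x) = (1/n)·∑_i ∇f_i(x) ≠ 0, the full-batch StoPS step size equals the plain gradient diversity: 2·[(1/n)·∑_i (f_i(x) − f_i(x*))] / ‖ḡ(x)‖² = [(1/n)·∑_i ‖∇f_i(x)‖²] / ‖ḡ(x)‖², and both equal [(1/n)·∑_i (⟨a_i, x⟩ − b_i)²] / ‖(1/n)·∑_i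 (⟨a_i, x⟩ − b_i)·a_i‖². -/
open scoped BigOperators RealInnerProductSpace

/-- StoPS and GraDS coincide for consistent linear systems with normalized rows:
the full-batch StoPS step size equals the plain gradient diversity, and both are
equal to the explicit ScaG step size. Here `fᵢ(x) = ½(⟪aᵢ, x⟫ - bᵢ)²` with
`∇fᵢ(x) = (⟪aᵢ, x⟫ - bᵢ) • aᵢ`. -/
theorem stops_eq_grads_linear
    (m n : ℕ) (hn : 1 ≤ n)
    (a : Fin n → EuclideanSpace ℝ (Fin m)) (ha : ∀ i, ‖a i‖ = 1)
    (xstar : EuclideanSpace ℝ (Fin m))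
    (b : Fin n → ℝ) (hb : ∀ i, b i = ⟪a i, xstar⟫)
    (x : EuclideanSpace ℝ (Fin m))
    (hg : (n : ℝ)⁻¹ • ∑ i, (⟪a i, x⟫ - b i) • a i ≠ 0) :
    2 * ((n : ℝ)⁻¹ * ∑ i, ((1 / 2) * (⟪a i, x⟫ - b i) ^ 2
            - (1 / 2) * (⟪a i, xstar⟫ - b i) ^ 2))
        / ‖(n : ℝ)⁻¹ • ∑ i, (⟪a i, x⟫ - b i) • a i‖ ^ 2
      = ((n : ℝ)⁻¹ * ∑ i, ‖(⟪a i, x⟫ - b i) • a i‖ ^ 2)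
          / ‖(n : ℝ)⁻¹ • ∑ i, (⟪a i, x⟫ - b i) • a i‖ ^ 2
    ∧ ((n : ℝ)⁻¹ * ∑ i, ‖(⟪a i, x⟫ - b i) • a i‖ ^ 2)
          / ‖(n : ℝ)⁻¹ • ∑ i, (⟪a i, x⟫ - b i) • a i‖ ^ 2
      = ((n : ℝ)⁻¹ * ∑ i, (⟪a i, x⟫ - b i) ^ 2)
          / ‖(n : ℝ)⁻¹ • ∑ i, (⟪a i, x⟫ - b i) • a i‖ ^ 2 := by
  have hnorm : ∀ i, ‖(⟪a i, x⟫ - b i) • a i‖ ^ 2 = (⟪a i, x⟫ - b i) ^ 2 := by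
    intro i
    rw [norm_smul, ha, mul_one, Real.norm_eq_abs, sq_abs]
  have hsum : ∑ i, ‖(⟪a i, x⟫ - b i) • a i‖ ^ 2 = ∑ i, (⟪a i, x⟫ - b i) ^ 2 :=
    Finset.sum_congr rfl fun i _ => hnorm i
  have hzero : ∀ i, ⟪a i, xstar⟫ - b i = 0 := fun i => by rw [hb i]; ring
  constructor
  · congr 1
    rw [hsum, ← mul_assoc, mul_comm (2:ℝ), mul_assoc]
    congr 1
    rw [Finset.mul_sum]
    refine Finset.sum_congr rfl fun i _ => ?_
    rw [hzero i]
    ring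
  · rw [hsum]
end

section
/- (One-step inequality for StoP, key step of Theorem 3.) Assume each f_i is differentiable and convex, f is μ-strongly convex with minimizer x*, and ℓ_i ≤ f_i(y) for all y ∈ E and all i. Let σ² = (1/N)·∑_i (f_i(x*) − ℓ_i) and fix a cap Γ > 0. Fix x ∈ E, assume ḡ_s(x) ≠ 0 for every minibatch s, and let γ_s(x) = min{Γ, 2·(1/n)·∑_j (f_{s(j)}(x) − ℓ_{s(j)}) / ‖ḡ_s(x)‖²}. Suppose γmin > 0 satisfies μ·γmin ≤ 1 and γ_s(x) ≥ γmin for every minibatch s. Then the average over all N^n minibatches s of ‖x − γ_s(x)·ḡ_s(x) − x*‖² is at most (1 − μ·γmin)·‖x − x*‖² + 2·Γ·σ². -/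
open scoped BigOperators RealInnerProductSpace

-- convexity gradient inequality
lemma stop_grad_conv {d : ℕ} {f : EuclideanSpace ℝ (Fin d) → ℝ}
    (hd : Differentiable ℝ f) (hc : ConvexOn ℝ Set.univ f)
    (x y : EuclideanSpace ℝ (Fin d)) :
    f x + ⟪gradient f x, y - x⟫ ≤ f y := by
  set φ : ℝ → ℝ := fun t => f (AffineMap.lineMap x y t) with hφ
  have hφc : ConvexOn ℝ Set.univ φ := by
    have := hc.comp_affineMap (AffineMap.lineMap x y)
    rw [Set.preimage_univ] at this
    exact this
  have hF : HasFDerivAt f (InnerProductSpace.toDual ℝ _ (gradient f x)) x :=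
    (hasGradientAt_iff_hasFDerivAt.mp (hd x).hasGradientAt)
  have hcurve : HasDerivAt (fun t : ℝ => AffineMap.lineMap x y t) (y - x) 0 := by
    have h1 : HasDerivAt (fun t : ℝ => t • (y - x)) ((1:ℝ) • (y - x)) 0 :=
      (hasDerivAt_id 0).smul_const (y - x)
    have h2 := h1.add_const x
    simp only [one_smul] at h2
    have e : (fun t : ℝ => AffineMap.lineMap x y t) = fun t => t • (y - x) + x := by
      funext t; rw [AffineMap.lineMap_apply, vsub_eq_sub, vadd_eq_add]
    rw [e]; exact h2
  have hφd : HasDerivAt φ ⟪gradient f x, y - x⟫ 0 := by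
    have h0 : (AffineMap.lineMap x y : ℝ → EuclideanSpace ℝ (Fin d)) 0 = x := by
      simp
    have := (h0 ▸ hF).comp_hasDerivAt 0 hcurve
    rw [InnerProductSpace.toDual_apply_apply, h0] at this
    exact this
  have hslope := hφc.le_slope_of_hasDerivAt (Set.mem_univ 0) (Set.mem_univ 1)
    one_pos hφd
  have h01 : slope φ 0 1 = f y - f x := by
    simp [slope_def_field, φ]
  rw [h01] at hslope
  linarith

-- gradient of (N⁻¹ * ∑ f i)
lemma stop_grad_avg {d N : ℕ} (f : Fin N → EuclideanSpace ℝ (Fin d) → ℝ)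
    (hdiff : ∀ i, Differentiable ℝ (f i)) (c : ℝ) (x : EuclideanSpace ℝ (Fin d)) :
    gradient (fun z => c * ∑ i, f i z) x = c • ∑ i, gradient (f i) x := by
  have hkey : ∀ i : Fin N, (InnerProductSpace.toDual ℝ (EuclideanSpace ℝ (Fin d)))
      (gradient (f i) x) = fderiv ℝ (f i) x := by
    intro i
    exact (hasGradientAt_iff_hasFDerivAt.mp (hdiff i x).hasGradientAt).fderiv.symm
  have hsum : HasFDerivAt (fun z => ∑ i, f i z) (∑ i, fderiv ℝ (f i) x) x :=
    HasFDerivAt.fun_sum (fun i _ => (hdiff i x).hasFDerivAt)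
  have hmul : HasFDerivAt (fun z => c * ∑ i, f i z) (c • ∑ i, fderiv ℝ (f i) x) x :=
    hsum.const_mul c
  have heq : (InnerProductSpace.toDual ℝ (EuclideanSpace ℝ (Fin d)))
      (c • ∑ i, gradient (f i) x) = c • ∑ i, fderiv ℝ (f i) x := by
    rw [map_smul, map_sum]
    simp_rw [hkey]
  have : HasGradientAt (fun z => c * ∑ i, f i z) (c • ∑ i, gradient (f i) x) x := by
    rw [hasGradientAt_iff_hasFDerivAt, heq]; exact hmul
  exact this.gradient

-- counting lemma
lemma stop_sum_eval {N n : ℕ} (j : Fin n) (h : Fin N → ℝ) :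
    ∑ s : Fin n → Fin N, h (s j) = (N ^ (n - 1) : ℕ) • ∑ i, h i := by
  classical
  rw [Fintype.sum_equiv (Equiv.funSplitAt j (Fin N)) (fun s => h (s j))
    (fun p => h p.1) (fun s => rfl)]
  rw [Fintype.sum_prod_type]
  simp only [Finset.sum_const, Finset.card_univ, ← Finset.smul_sum]
  congr 1
  rw [Fintype.card_fun]
  congr 1
  · simp [Fintype.card_fin]
  · rw [Fintype.card_subtype_compl]
    simp [Fintype.card_subtype_eq]

lemma stop_avg {N n : ℕ} (hN : 1 ≤ N) (hn : 1 ≤ n) (h : Fin N → ℝ) :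
    ((N : ℝ) ^ n)⁻¹ * ∑ s : Fin n → Fin N, ((n : ℝ)⁻¹ * ∑ j, h (s j))
      = (N : ℝ)⁻¹ * ∑ i, h i := by
  have hNne : (N : ℝ) ≠ 0 := Nat.cast_ne_zero.mpr (by omega)
  have hnne : (n : ℝ) ≠ 0 := Nat.cast_ne_zero.mpr (by omega)
  rw [← Finset.mul_sum, Finset.sum_comm]
  have : ∀ j : Fin n, ∑ s : Fin n → Fin N, h (s j) = (N ^ (n - 1) : ℕ) • ∑ i, h i :=
    fun j => stop_sum_eval j h
  simp_rw [this]
  rw [Finset.sum_const, Finset.card_univ, Fintype.card_fin, smul_smul, nsmul_eq_mul]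
  have hpow : (N : ℝ) ^ n = (N : ℝ) * (N : ℝ) ^ (n - 1) := by
    conv_lhs => rw [show n = (n - 1) + 1 by omega]
    rw [pow_succ]; ring
  push_cast
  rw [hpow]
  field_simp

set_option maxHeartbeats 1000000 in
/-- One-step inequality for StoP (key step of Theorem 3). -/
theorem stop_one_step
    (d N n : ℕ) (hN : 1 ≤ N) (hn : 1 ≤ n)
    (f : Fin N → EuclideanSpace ℝ (Fin d) → ℝ)
    (hdiff : ∀ i, Differentiable ℝ (f i))
    (hconv : ∀ i, ConvexOn ℝ Set.univ (f i))
    (μ : ℝ) (hμ : 0 < μ)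
    (xstar : EuclideanSpace ℝ (Fin d))
    (hsc : ∀ x y : EuclideanSpace ℝ (Fin d),
      (N : ℝ)⁻¹ * ∑ i, f i x
        + ⟪gradient (fun z => (N : ℝ)⁻¹ * ∑ i, f i z) x, y - x⟫
        + μ / 2 * ‖y - x‖ ^ 2 ≤ (N : ℝ)⁻¹ * ∑ i, f i y)
    (hmin : ∀ y, (N : ℝ)⁻¹ * ∑ i, f i xstar ≤ (N : ℝ)⁻¹ * ∑ i, f i y)
    (ℓ : Fin N → ℝ) (hℓ : ∀ i (y : EuclideanSpace ℝ (Fin d)), ℓ i ≤ f i y)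
    (σ2 : ℝ) (hσ2 : σ2 = (N : ℝ)⁻¹ * ∑ i, (f i xstar - ℓ i))
    (Γ : ℝ) (hΓ : 0 < Γ)
    (g : (Fin n → Fin N) → EuclideanSpace ℝ (Fin d) → EuclideanSpace ℝ (Fin d))
    (hg : ∀ s x, g s x = (n : ℝ)⁻¹ • ∑ j, gradient (f (s j)) x)
    (γ : (Fin n → Fin N) → EuclideanSpace ℝ (Fin d) → ℝ)
    (hγ : ∀ s x, γ s x
      = min Γ (2 * ((n : ℝ)⁻¹ * ∑ j, (f (s j) x - ℓ (s j))) / ‖g s x‖ ^ 2))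
    (x : EuclideanSpace ℝ (Fin d))
    (hgne : ∀ s, g s x ≠ 0)
    (γmin : ℝ) (hγmin : 0 < γmin) (hμγ : μ * γmin ≤ 1)
    (hlb : ∀ s, γmin ≤ γ s x) :
    ((N : ℝ) ^ n)⁻¹ * ∑ s : Fin n → Fin N, ‖x - γ s x • g s x - xstar‖ ^ 2
      ≤ (1 - μ * γmin) * ‖x - xstar‖ ^ 2 + 2 * Γ * σ2 := by
  classical
  set v : EuclideanSpace ℝ (Fin d) := x - xstar with hv
  set G : Fin N → EuclideanSpace ℝ (Fin d) := fun i => gradient (f i) x with hG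
  have hNne : (N : ℝ) ≠ 0 := Nat.cast_ne_zero.mpr (by omega)
  have hnpos : (0:ℝ) < (n:ℝ) := by exact_mod_cast hn
  have hNnpos : (0:ℝ) < ((N:ℝ)^n)⁻¹ := by positivity
  -- per-i components
  set r : Fin N → ℝ := fun i =>
    ‖v‖ ^ 2 - 2 * γmin * ⟪G i, v⟫ + 2 * Γ * (f i xstar - ℓ i)
      + 2 * γmin * (f i x - f i xstar) with hr
  -- per-sample abbreviations
  have hA : ∀ s : Fin n → Fin N,
      (n : ℝ)⁻¹ * ∑ j, r (s j)
        = ‖v‖ ^ 2 - 2 * γmin * ((n:ℝ)⁻¹ * ∑ j, ⟪G (s j), v⟫)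
          + 2 * Γ * ((n:ℝ)⁻¹ * ∑ j, (f (s j) xstar - ℓ (s j)))
          + 2 * γmin * ((n:ℝ)⁻¹ * ∑ j, (f (s j) x - f (s j) xstar)) := by
    intro s
    have e1 : ∑ j, r (s j)
        = (n:ℝ) * ‖v‖ ^ 2 - 2 * γmin * (∑ j, ⟪G (s j), v⟫)
          + 2 * Γ * (∑ j, (f (s j) xstar - ℓ (s j)))
          + 2 * γmin * (∑ j, (f (s j) x - f (s j) xstar)) := by
      simp only [hr]
      rw [Finset.sum_add_distrib, Finset.sum_add_distrib, Finset.sum_sub_distrib,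
        ← Finset.mul_sum, ← Finset.mul_sum, ← Finset.mul_sum, Finset.sum_const,
        Finset.card_univ, Fintype.card_fin, nsmul_eq_mul]
    rw [e1]
    have hnne : (n:ℝ) ≠ 0 := ne_of_gt hnpos
    field_simp
  -- inner product of minibatch gradient
  have hip : ∀ s : Fin n → Fin N,
      ⟪g s x, v⟫ = (n:ℝ)⁻¹ * ∑ j, ⟪G (s j), v⟫ := by
    intro s
    rw [hg, real_inner_smul_left, sum_inner]
  -- pointwise bound
  have hpoint : ∀ s : Fin n → Fin N,
      ‖x - γ s x • g s x - xstar‖ ^ 2 ≤ (n : ℝ)⁻¹ * ∑ j, r (s j) := by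
    intro s
    set γs := γ s x with hγs
    set gs := g s x with hgs
    set ip := ⟪gs, v⟫ with hipdef
    set A := (n:ℝ)⁻¹ * ∑ j, f (s j) x with hAdef
    set B := (n:ℝ)⁻¹ * ∑ j, f (s j) xstar with hBdef
    set L := (n:ℝ)⁻¹ * ∑ j, ℓ (s j) with hLdef
    have hgpos : (0:ℝ) < ‖gs‖ ^ 2 := by
      have h0 : gs ≠ 0 := hgne s
      exact pow_pos (norm_pos_iff.mpr h0) 2
    -- expansion
    have hexp : ‖x - γs • gs - xstar‖ ^ 2
        = ‖v‖ ^ 2 - 2 * γs * ip + γs ^ 2 * ‖gs‖ ^ 2 := by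
      rw [sub_right_comm]
      rw [show x - xstar = v from rfl]
      rw [norm_sub_sq_real]
      rw [real_inner_smul_right, norm_smul]
      simp only [Real.norm_eq_abs, mul_pow, sq_abs]
      rw [real_inner_comm]
      ring
    have hALsum : (n:ℝ)⁻¹ * ∑ j, (f (s j) x - ℓ (s j)) = A - L := by
      rw [Finset.sum_sub_distrib, mul_sub]
    -- γs ≤ Γ
    have hγΓ : γs ≤ Γ := by rw [hγs, hγ]; exact min_le_left _ _
    -- γs * ‖gs‖² ≤ 2 (A − L)
    have hγg : γs * ‖gs‖ ^ 2 ≤ 2 * (A - L) := by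
      have h1 : γs ≤ 2 * (A - L) / ‖gs‖ ^ 2 := by
        rw [hγs, hγ, ← hgs, hALsum]; exact min_le_right _ _
      calc γs * ‖gs‖ ^ 2 ≤ (2 * (A - L) / ‖gs‖ ^ 2) * ‖gs‖ ^ 2 := by
            apply mul_le_mul_of_nonneg_right h1 (le_of_lt hgpos)
        _ = 2 * (A - L) := by rw [div_mul_cancel₀ _ (ne_of_gt hgpos)]
    -- A − B ≤ ip
    have hAB : A - B ≤ ip := by
      have hterm : ∀ j : Fin n, f (s j) x - f (s j) xstar ≤ ⟪G (s j), v⟫ := by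
        intro j
        have := stop_grad_conv (hdiff (s j)) (hconv (s j)) x xstar
        have hneg : (⟪G (s j), xstar - x⟫ : ℝ) = -⟪G (s j), v⟫ := by
          rw [hv, show xstar - x = -(x - xstar) by abel, inner_neg_right]
        rw [hneg] at this
        linarith
      have hsum : ∑ j, (f (s j) x - f (s j) xstar) ≤ ∑ j, ⟪G (s j), v⟫ :=
        Finset.sum_le_sum (fun j _ => hterm j)
      have := mul_le_mul_of_nonneg_left hsum (le_of_lt (inv_pos.mpr hnpos))
      rw [Finset.sum_sub_distrib, mul_sub] at this
      rw [hAdef, hBdef, hipdef, hip]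
      exact this
    -- L ≤ B
    have hLB : L ≤ B := by
      rw [hLdef, hBdef]
      apply mul_le_mul_of_nonneg_left _ (le_of_lt (inv_pos.mpr hnpos))
      exact Finset.sum_le_sum (fun j _ => hℓ (s j) xstar)
    have hγlb : γmin ≤ γs := hlb s
    -- final pointwise
    rw [hexp, hA s, ← hip s, ← hipdef]
    have hABrw : (n:ℝ)⁻¹ * ∑ j, (f (s j) xstar - ℓ (s j)) = B - L := by
      rw [Finset.sum_sub_distrib, mul_sub]
    have hABrw2 : (n:ℝ)⁻¹ * ∑ j, (f (s j) x - f (s j) xstar) = A - B := by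
      rw [Finset.sum_sub_distrib, mul_sub]
    rw [hABrw, hABrw2]
    nlinarith [mul_nonneg (sub_nonneg.mpr hγlb) (sub_nonneg.mpr hAB),
      mul_le_mul_of_nonneg_left hγg (le_of_lt (lt_of_lt_of_le hγmin hγlb)),
      mul_nonneg (sub_nonneg.mpr hγΓ) (sub_nonneg.mpr hLB)]
  -- sum and average
  have hsumle : ((N : ℝ) ^ n)⁻¹ * ∑ s : Fin n → Fin N, ‖x - γ s x • g s x - xstar‖ ^ 2
      ≤ ((N : ℝ) ^ n)⁻¹ * ∑ s : Fin n → Fin N, ((n : ℝ)⁻¹ * ∑ j, r (s j)) := by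
    apply mul_le_mul_of_nonneg_left _ (le_of_lt hNnpos)
    exact Finset.sum_le_sum (fun s _ => hpoint s)
  rw [stop_avg hN hn r] at hsumle
  -- compute the averaged RHS
  have hgradf : gradient (fun z => (N : ℝ)⁻¹ * ∑ i, f i z) x = (N:ℝ)⁻¹ • ∑ i, G i :=
    stop_grad_avg f hdiff _ x
  have hscx := hsc x xstar
  rw [hgradf] at hscx
  have hipavg : (⟪(N:ℝ)⁻¹ • ∑ i, G i, xstar - x⟫ : ℝ)
      = -((N:ℝ)⁻¹ * ∑ i, ⟪G i, v⟫) := by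
    rw [show xstar - x = -v by rw [hv]; abel, inner_neg_right, real_inner_smul_left,
      sum_inner]
  rw [hipavg] at hscx
  have hnormswap : ‖xstar - x‖ = ‖v‖ := by rw [hv, norm_sub_rev]
  rw [hnormswap] at hscx
  -- expand N⁻¹ * ∑ r
  have hravg : (N:ℝ)⁻¹ * ∑ i, r i
      = ‖v‖ ^ 2 - 2 * γmin * ((N:ℝ)⁻¹ * ∑ i, ⟪G i, v⟫)
        + 2 * Γ * σ2
        + 2 * γmin * ((N:ℝ)⁻¹ * ∑ i, f i x - (N:ℝ)⁻¹ * ∑ i, f i xstar) := by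
    rw [hσ2]
    have e1 : ∑ i, r i
        = (N:ℝ) * ‖v‖ ^ 2 - 2 * γmin * (∑ i, ⟪G i, v⟫)
          + 2 * Γ * (∑ i, (f i xstar - ℓ i))
          + 2 * γmin * (∑ i, (f i x - f i xstar)) := by
      simp only [hr]
      rw [Finset.sum_add_distrib, Finset.sum_add_distrib, Finset.sum_sub_distrib,
        ← Finset.mul_sum, ← Finset.mul_sum, ← Finset.mul_sum, Finset.sum_const,
        Finset.card_univ, Fintype.card_fin, nsmul_eq_mul]
    rw [e1, Finset.sum_sub_distrib]
    field_simp
    simp only [Finset.sum_sub_distrib]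
  rw [hravg] at hsumle
  -- strong convexity combination
  have hfinal : ‖v‖ ^ 2 - 2 * γmin * ((N:ℝ)⁻¹ * ∑ i, ⟪G i, v⟫)
        + 2 * Γ * σ2
        + 2 * γmin * ((N:ℝ)⁻¹ * ∑ i, f i x - (N:ℝ)⁻¹ * ∑ i, f i xstar)
      ≤ (1 - μ * γmin) * ‖v‖ ^ 2 + 2 * Γ * σ2 := by
    have h2 := mul_le_mul_of_nonneg_left hscx (by positivity : (0:ℝ) ≤ 2 * γmin)
    nlinarith [h2]
  have : ‖x - xstar‖ = ‖v‖ := rfl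
  rw [this]
  linarith
end
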